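/- arXiv:2304.10937 — 4 statements merged into one kernel-verified Lean document; each statement's English description precedes it below -/
import Mathlib

section
/- There exists an absolute constant C > 0 such that for all H ∈ (0,1) and all ε ∈ (0, e^{−1}], with L = ⌈1/H⌉ and M = ⌈L − ln(HεL)/ln(1+H)⌉ and N = 2M, one has H ≤ C N^{−1} ln(1/ε); equivalently N·H ≤ C ln(1/ε). -/
open MeasureTheory Set

/-- L² norm of `f` on the interval `(a,b)`. -/
noncomputable def l2norm (f : ℝ → ℝ) (a b : ℝ) : ℝ :=
  Real.sqrt (∫ x in a..b, (f x) ^ 2)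

/-- `L = ⌈1/H⌉`. -/
noncomputable def mL (H : ℝ) : ℕ := ⌈1 / H⌉₊

/-- `M = ⌈L − ln(HεL)/ln(1+H)⌉`. -/
noncomputable def mM (H ε : ℝ) : ℕ :=
  ⌈(mL H : ℝ) - Real.log (H * ε * mL H) / Real.log (1 + H)⌉₊

/-- Durán mesh points on `[0,1]`: `x_0 = 0`, `x_i = iHε` for `i ≤ L`,
`x_i = (1+H) x_{i-1}` for `L < i ≤ M-1` (closed form `HεL(1+H)^{i-L}`), `x_M = 1`. -/
noncomputable def duranX0 (H ε : ℝ) (i : ℕ) : ℝ :=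
  if i ≤ mL H then (i : ℝ) * H * ε
  else if i < mM H ε then H * ε * (mL H : ℝ) * (1 + H) ^ (i - mL H)
  else 1

/-- Durán mesh points on `[0,2]`: `x_{M+i} = 1 + x_i`. -/
noncomputable def duranX (H ε : ℝ) (i : ℕ) : ℝ :=
  if i ≤ mM H ε then duranX0 H ε i else 1 + duranX0 H ε (i - mM H ε)

/-- Durán mesh cell widths `h_i = x_i − x_{i-1}`. -/
noncomputable def duranH (H ε : ℝ) (i : ℕ) : ℝ :=
  duranX H ε i - duranX H ε (i - 1)

/-- Mesh-size estimate `H ≲ N⁻¹ ln(1/ε)` for the Durán mesh: there is an absolute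
constant `C > 0` with `N·H ≤ C ln(1/ε)` for all `H ∈ (0,1)` and `ε ∈ (0, e⁻¹]`,
where `N = 2M`. -/
theorem duran_H_bound :
    ∃ C : ℝ, 0 < C ∧ ∀ H ε : ℝ, H ∈ Set.Ioo (0:ℝ) 1 → ε ∈ Set.Ioc (0:ℝ) (Real.exp (-1)) →
      (2 * mM H ε : ℝ) * H ≤ C * Real.log (1 / ε) := by
  refine ⟨10, by norm_num, ?_⟩
  rintro H ε ⟨hH0, hH1⟩ ⟨hε0, hε1⟩
  have hL_le : (1:ℝ) / H ≤ (mL H : ℝ) := Nat.le_ceil _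
  have hinv : (0:ℝ) ≤ 1 / H := by positivity
  have hL_lt : (mL H : ℝ) < 1 / H + 1 := Nat.ceil_lt_add_one hinv
  have hLpos : (0:ℝ) < (mL H : ℝ) := lt_of_lt_of_le (by positivity) hL_le
  have hHL1 : 1 ≤ H * (mL H : ℝ) := by
    have := (div_le_iff₀ hH0).mp hL_le; nlinarith
  have hHL2 : H * (mL H : ℝ) ≤ 1 + H := by
    have := mul_lt_mul_of_pos_left hL_lt hH0
    rw [mul_add, mul_one, mul_one_div, div_self (ne_of_gt hH0)] at this
    linarith
  -- log bounds
  have hlogε : 1 ≤ Real.log (1 / ε) := by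
    rw [one_div, Real.log_inv]
    have := Real.log_le_log hε0 hε1
    rw [Real.log_exp] at this
    linarith
  have hlog1H_pos : 0 < Real.log (1 + H) := Real.log_pos (by linarith)
  have hHhalf : H / 2 ≤ Real.log (1 + H) := by
    have h1 : H / (1 + H) ≤ Real.log (1 + H) := by
      have h2 : (1:ℝ) - H / (1 + H) ≤ Real.exp (-(H / (1 + H))) := by
        have := Real.add_one_le_exp (-(H / (1 + H)))
        linarith
      have h3 : (1:ℝ) - H / (1 + H) = 1 / (1 + H) := by
        field_simp; ring
      rw [h3] at h2
      have h4 : Real.exp (H / (1 + H)) ≤ 1 + H := by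
        have h5 : Real.exp (H / (1 + H)) * Real.exp (-(H / (1 + H))) = 1 := by
          rw [← Real.exp_add]; simp
        have h6 : (0:ℝ) < 1 / (1 + H) := by positivity
        have h7 : (1 + H) * (1 / (1 + H)) = 1 := by field_simp
        nlinarith [Real.exp_pos (H / (1 + H)),
          mul_le_mul_of_nonneg_left h2 (Real.exp_pos (H / (1 + H))).le]
      have := Real.log_le_log (Real.exp_pos _) h4
      rwa [Real.log_exp] at this
    have : H / 2 ≤ H / (1 + H) := by
      apply div_le_div_of_nonneg_left hH0.le (by linarith) (by linarith)
    linarith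
  -- bound on -log(HεL)
  have hεL_pos : 0 < H * ε * (mL H : ℝ) := by positivity
  have hεL_ge : ε ≤ H * ε * (mL H : ℝ) := by nlinarith
  have hεL_le : H * ε * (mL H : ℝ) < 1 := by
    have : ε < 1 / 2 := by
      have : Real.exp (-1) < 1 / 2 := by
        rw [Real.exp_neg]
        have h9 := Real.exp_one_gt_d9
        have hinv1 : (Real.exp 1)⁻¹ * Real.exp 1 = 1 :=
          inv_mul_cancel₀ (ne_of_gt (Real.exp_pos 1))
        nlinarith [Real.exp_pos 1, inv_pos.mpr (Real.exp_pos 1)]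
      linarith
    nlinarith
  have hlogneg : Real.log (H * ε * (mL H : ℝ)) ≤ 0 :=
    Real.log_nonpos hεL_pos.le hεL_le.le
  have hlog_ge : -Real.log ε ≥ -Real.log (H * ε * (mL H : ℝ)) := by
    have := Real.log_le_log hε0 hεL_ge
    linarith
  -- bound M
  have hMarg : (0:ℝ) ≤ (mL H : ℝ) - Real.log (H * ε * (mL H : ℝ)) / Real.log (1 + H) := by
    have : 0 ≤ -Real.log (H * ε * (mL H : ℝ)) / Real.log (1 + H) := by
      apply div_nonneg (by linarith) hlog1H_pos.le
    have : -(Real.log (H * ε * (mL H : ℝ)) / Real.log (1 + H)) =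
        -Real.log (H * ε * (mL H : ℝ)) / Real.log (1 + H) := by ring
    linarith [hLpos]
  have hM_lt : (mM H ε : ℝ) <
      (mL H : ℝ) - Real.log (H * ε * (mL H : ℝ)) / Real.log (1 + H) + 1 :=
    Nat.ceil_lt_add_one hMarg
  -- key: H * (-log(HεL)/log(1+H)) ≤ 2 * log(1/ε)
  set A := -Real.log (H * ε * (mL H : ℝ)) with hA_def
  have hA : 0 ≤ A := by simp [hA_def]; linarith
  have hkey : H * (A / Real.log (1 + H)) ≤ 2 * Real.log (1 / ε) := by
    have h1 : H * (A / Real.log (1 + H)) ≤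
        (2 * Real.log (1 + H)) * (A / Real.log (1 + H)) :=
      mul_le_mul_of_nonneg_right (by linarith) (div_nonneg hA hlog1H_pos.le)
    have h2 : (2 * Real.log (1 + H)) * (A / Real.log (1 + H)) = 2 * A := by
      field_simp
    have h3 : A ≤ Real.log (1 / ε) := by
      rw [one_div, Real.log_inv]; linarith
    linarith
  -- conclude
  have hstep := mul_lt_mul_of_pos_right hM_lt hH0
  have hexp : ((mL H : ℝ) - Real.log (H * ε * (mL H : ℝ)) / Real.log (1 + H) + 1) * H =
      H * (mL H : ℝ) + H * (A / Real.log (1 + H)) + H := by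
    rw [hA_def]; ring
  rw [hexp] at hstep
  have hNH : (2 * mM H ε : ℝ) * H = 2 * ((mM H ε : ℝ) * H) := by ring
  rw [hNH]
  nlinarith
end

section
/- Let k ≥ 1 be an integer, β > 0, H ∈ (0,1), ε ∈ (0,1) with ⌈1/H⌉Hε < 1, and let x_0,…,x_{2M} be the Durán mesh. Let I be an interpolation operator satisfying the per-cell estimates with constant C₀, and let E ∈ C^{k+1}([0,1]) satisfy |E^{(k+1)}(x)| ≤ ε^{−(k+1)} e^{−βx/ε} for x ∈ [0,1]. Then there is a constant C = C(k,β,C₀), independent of ε and H, with ‖E − IE‖_{L²(0,1)} ≤ C ε^{1/2} H^{k+1}. -/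
open MeasureTheory Set

/-- Per-cell interpolation error estimates for an interpolation operator `I` on the mesh
with nodes `X 0 < X 1 < … < X N`, with constant `C0` and polynomial degree `k`:
`‖v − Iv‖_{L²(τ_i)} ≤ C0 h_i^s ‖v^{(s)}‖_{L²(τ_i)}` for `1 ≤ s ≤ k+1` and
`‖(v − Iv)'‖_{L²(τ_i)} ≤ C0 h_i^t ‖v^{(t+1)}‖_{L²(τ_i)}` for `1 ≤ t ≤ k`. -/
def PerCell (k : ℕ) (C0 : ℝ) (X : ℕ → ℝ) (N : ℕ) (I : (ℝ → ℝ) → ℝ → ℝ) : Prop :=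
  ∀ v : ℝ → ℝ, ContDiff ℝ (k + 1) v → ∀ i : ℕ, 1 ≤ i → i ≤ N →
    (∀ s : ℕ, 1 ≤ s → s ≤ k + 1 →
      l2norm (fun y => v y - I v y) (X (i - 1)) (X i) ≤
        C0 * (X i - X (i - 1)) ^ s * l2norm (iteratedDeriv s v) (X (i - 1)) (X i)) ∧
    (∀ t : ℕ, 1 ≤ t → t ≤ k →
      l2norm (deriv (fun y => v y - I v y)) (X (i - 1)) (X i) ≤
        C0 * (X i - X (i - 1)) ^ t * l2norm (iteratedDeriv (t + 1) v) (X (i - 1)) (X i))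

/- ======================= auxiliary lemmas ======================= -/

lemma aux_pow_mul_exp_neg_le (n : ℕ) {β y : ℝ} (hβ : 0 < β) (hy : 0 ≤ y) :
    y ^ n * Real.exp (-(β * y)) ≤ n.factorial / β ^ n := by
  have h1 : (β * y) ^ n / n.factorial ≤ Real.exp (β * y) := by
    calc (β * y) ^ n / n.factorial
        ≤ ∑ i ∈ Finset.range (n + 1), (β * y) ^ i / i.factorial := by
          refine Finset.single_le_sum (f := fun i => (β * y) ^ i / (i.factorial : ℝ)) ?_
            (Finset.self_mem_range_succ n)
          intro i _; positivity
      _ ≤ Real.exp (β * y) := Real.sum_le_exp_of_nonneg (by positivity) _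
  have hfac : (0:ℝ) < n.factorial := by exact_mod_cast n.factorial_pos
  have h2 : (β * y) ^ n ≤ n.factorial * Real.exp (β * y) := by
    rw [div_le_iff₀ hfac] at h1; linarith [h1]
  have h3 : y ^ n * Real.exp (-(β * y)) * β ^ n ≤ n.factorial := by
    have he : Real.exp (-(β * y)) * Real.exp (β * y) = 1 := by
      rw [← Real.exp_add]; simp
    have : y ^ n * β ^ n = (β * y) ^ n := by rw [mul_pow]; ring
    nlinarith [Real.exp_pos (-(β * y)), Real.exp_pos (β * y), h2]
  rw [le_div_iff₀ (by positivity : (0:ℝ) < β ^ n)]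
  linarith

lemma aux_cell_pointwise (p : ℕ) {β ε H h u x : ℝ} (hβ : 0 < β) (hε : 0 < ε) (hH : 0 < H)
    (hu : 0 ≤ u) (hx : u ≤ x)
    (hcase : h ≤ H * ε ∨ h ≤ H * u) (hh : 0 ≤ h) :
    (h ^ p) ^ 2 * ((ε ^ p)⁻¹ * Real.exp (-β * x / ε)) ^ 2 ≤
      (H ^ p) ^ 2 * max 1 ((Nat.factorial (2 * p) : ℝ) / β ^ (2 * p)) *
        Real.exp (-β * x / ε) := by
  set K := max 1 ((Nat.factorial (2 * p) : ℝ) / β ^ (2 * p)) with hK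
  have hK1 : (1:ℝ) ≤ K := le_max_left _ _
  have hx0 : 0 ≤ x := hu.trans hx
  set e := Real.exp (-β * x / ε) with he
  have he0 : 0 < e := Real.exp_pos _
  have he1 : e ≤ 1 := Real.exp_le_one_iff.mpr (by
    apply div_nonpos_of_nonpos_of_nonneg _ hε.le; nlinarith)
  have hbase : (h ^ p) ^ 2 * ((ε ^ p)⁻¹ * e) ^ 2 = ((h / ε) ^ p) ^ 2 * e ^ 2 := by
    rw [div_pow]; field_simp
  rw [hbase]
  have hde0 : 0 ≤ (h / ε) ^ p := by positivity
  rcases hcase with hc | hc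
  · have h1 : (h / ε) ^ p ≤ H ^ p := by
      apply pow_le_pow_left₀ (by positivity)
      rw [div_le_iff₀ hε]; linarith
    have hHp : (0:ℝ) ≤ H ^ p := by positivity
    calc ((h / ε) ^ p) ^ 2 * e ^ 2 ≤ (H ^ p) ^ 2 * e ^ 2 :=
          mul_le_mul_of_nonneg_right (pow_le_pow_left₀ hde0 h1 2) (sq_nonneg e)
      _ ≤ (H ^ p) ^ 2 * (1 * e) := by
          refine mul_le_mul_of_nonneg_left ?_ (sq_nonneg _)
          nlinarith [mul_le_mul_of_nonneg_right he1 he0.le]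
      _ ≤ (H ^ p) ^ 2 * K * e := by
          have h' := mul_le_mul_of_nonneg_left
            (mul_le_mul_of_nonneg_right hK1 he0.le) (sq_nonneg (H ^ p))
          nlinarith [h']
  · set y := u / ε with hy
    have hy0 : 0 ≤ y := by positivity
    have h1 : (h / ε) ^ p ≤ H ^ p * y ^ p := by
      rw [← mul_pow]
      apply pow_le_pow_left₀ (by positivity)
      rw [div_le_iff₀ hε, hy]
      calc h ≤ H * u := hc
        _ = H * (u / ε) * ε := by field_simp
    have h2 : e ≤ Real.exp (-(β * y)) := by
      apply Real.exp_le_exp.mpr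
      rw [hy, show -(β * (u / ε)) = -β * u / ε from by ring, div_le_div_iff₀ hε hε]
      nlinarith [mul_le_mul_of_nonneg_right (mul_le_mul_of_nonneg_left hx hβ.le) hε.le]
    have h3 : y ^ (2 * p) * Real.exp (-(β * y)) ≤ K :=
      le_trans (aux_pow_mul_exp_neg_le (2 * p) hβ hy0) (le_max_right _ _)
    have hexp0 : 0 < Real.exp (-(β * y)) := Real.exp_pos _
    have key : ((h / ε) ^ p) ^ 2 ≤ (H ^ p) ^ 2 * (y ^ (2 * p)) := by
      have := pow_le_pow_left₀ hde0 h1 2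
      calc ((h / ε) ^ p) ^ 2 ≤ (H ^ p * y ^ p) ^ 2 := this
        _ = (H ^ p) ^ 2 * (y ^ (2 * p)) := by
            rw [mul_pow]; congr 1; rw [← pow_mul, Nat.mul_comm]
    calc ((h / ε) ^ p) ^ 2 * e ^ 2
        ≤ ((H ^ p) ^ 2 * y ^ (2 * p)) * (Real.exp (-(β * y)) * e) := by
          have he2 : e ^ 2 ≤ Real.exp (-(β * y)) * e := by
            rw [sq]; exact mul_le_mul_of_nonneg_right h2 he0.le
          exact mul_le_mul key he2 (by positivity) (by positivity)
      _ = (y ^ (2 * p) * Real.exp (-(β * y))) * ((H ^ p) ^ 2 * e) := by ring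
      _ ≤ K * ((H ^ p) ^ 2 * e) := mul_le_mul_of_nonneg_right h3 (by positivity)
      _ = (H ^ p) ^ 2 * K * e := by ring

lemma aux_exp_cont {β ε : ℝ} : Continuous fun x : ℝ => Real.exp (-β * x / ε) := by
  fun_prop

lemma aux_exp_integral_le {β ε : ℝ} (hβ : 0 < β) (hε : 0 < ε) :
    (∫ x in (0:ℝ)..1, Real.exp (-β * x / ε)) ≤ ε / β := by
  have hder : ∀ x ∈ Set.uIcc (0:ℝ) 1,
      HasDerivAt (fun x : ℝ => -(ε / β) * Real.exp (-β * x / ε))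
        (Real.exp (-β * x / ε)) x := by
    intro x _
    have h1 : HasDerivAt (fun x : ℝ => -β * x / ε) (-β / ε) x := by
      simpa using ((hasDerivAt_id x).const_mul (-β)).div_const ε
    have h2 := (h1.exp).const_mul (-(ε / β))
    refine h2.congr_deriv ?_
    have hβ' : β ≠ 0 := hβ.ne'
    have hε' : ε ≠ 0 := hε.ne'
    rw [show -(ε / β) * (Real.exp (-β * x / ε) * (-β / ε)) = Real.exp (-β * x / ε) * ((ε / β) * (β / ε)) by ring, div_mul_div_cancel₀ hβ', div_self hε', mul_one]
  have hint : IntervalIntegrable (fun x : ℝ => Real.exp (-β * x / ε))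
      MeasureTheory.volume 0 1 := aux_exp_cont.intervalIntegrable 0 1
  rw [intervalIntegral.integral_eq_sub_of_hasDerivAt hder hint]
  have h3 : 0 < Real.exp (-β * 1 / ε) := Real.exp_pos _
  have h4 : Real.exp (-β * 0 / ε) = 1 := by norm_num
  have h5 : 0 < ε / β := by positivity
  rw [h4]
  nlinarith

lemma aux_duran_mesh {H ε : ℝ} (hH : H ∈ Set.Ioo (0:ℝ) 1) (hε : ε ∈ Set.Ioo (0:ℝ) 1)
    (hc : H * ε * mL H < 1) :
    duranX0 H ε 0 = 0 ∧ duranX0 H ε (mM H ε) = 1 ∧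
    ∀ i : ℕ, 1 ≤ i → i ≤ mM H ε →
      0 ≤ duranX0 H ε (i-1) ∧ duranX0 H ε (i-1) ≤ duranX0 H ε i ∧ duranX0 H ε i ≤ 1 ∧
      (duranX0 H ε i - duranX0 H ε (i-1) ≤ H * ε ∨
       duranX0 H ε i - duranX0 H ε (i-1) ≤ H * duranX0 H ε (i-1)) := by
  obtain ⟨hH0, hH1⟩ := hH
  obtain ⟨hε0, hε1⟩ := hε
  have hLpos : 0 < mL H := Nat.ceil_pos.mpr (by positivity)
  have hLR : (0:ℝ) < mL H := by exact_mod_cast hLpos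
  set L := mL H with hLdef
  set q := H * ε * (L:ℝ) with hqdef
  have hq0 : 0 < q := by positivity
  have hlogq : Real.log q < 0 := Real.log_neg hq0 hc
  have hlog1H : 0 < Real.log (1 + H) := Real.log_pos (by linarith)
  set a := (L:ℝ) - Real.log q / Real.log (1 + H) with hadef
  have haL : (L:ℝ) < a := by
    have : Real.log q / Real.log (1 + H) < 0 := div_neg_of_neg_of_pos hlogq hlog1H
    simp only [hadef]; linarith
  have ha0 : 0 ≤ a := le_trans hLR.le haL.le
  set M := mM H ε with hMdef2
  have hMa : a ≤ (M:ℝ) := Nat.le_ceil a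
  have hMceil : M = ⌈a⌉₊ := rfl
  have hMlt : (M:ℝ) < a + 1 := by rw [hMceil]; exact Nat.ceil_lt_add_one ha0
  have hLM : L < M := by exact_mod_cast lt_of_lt_of_le haL hMa
  have pow_exp : ∀ j : ℕ, ((1+H):ℝ) ^ j = Real.exp (j * Real.log (1 + H)) := by
    intro j
    rw [Real.exp_nat_mul, Real.exp_log (by linarith)]
  have key_ge : 1 ≤ q * (1 + H) ^ (M - L) := by
    have hcast : ((M - L : ℕ) : ℝ) = (M:ℝ) - L := by
      push_cast [Nat.cast_sub hLM.le]; ring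
    have hj : -Real.log q ≤ ((M - L : ℕ) : ℝ) * Real.log (1 + H) := by
      rw [hcast]
      have h1 : -(Real.log q / Real.log (1 + H)) ≤ (M:ℝ) - L := by
        have := hMa; simp only [hadef] at this; linarith
      calc -Real.log q = (-(Real.log q / Real.log (1 + H))) * Real.log (1 + H) := by
            field_simp
        _ ≤ ((M:ℝ) - L) * Real.log (1 + H) := by
            exact mul_le_mul_of_nonneg_right h1 hlog1H.le
    calc (1:ℝ) = Real.exp (Real.log q + (-Real.log q)) := by simp
      _ ≤ Real.exp (Real.log q + ((M - L : ℕ) : ℝ) * Real.log (1 + H)) := by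
          exact Real.exp_le_exp.mpr (by linarith)
      _ = q * (1 + H) ^ (M - L) := by
          rw [Real.exp_add, Real.exp_log hq0, pow_exp]
  have key_le : q * (1 + H) ^ (M - 1 - L) ≤ 1 := by
    have hcast : ((M - 1 - L : ℕ) : ℝ) = (M:ℝ) - 1 - L := by
      push_cast [Nat.cast_sub (by omega : L ≤ M - 1), Nat.cast_sub (by omega : 1 ≤ M)]; ring
    have hj : ((M - 1 - L : ℕ) : ℝ) * Real.log (1 + H) ≤ -Real.log q := by
      rw [hcast]
      have h1 : (M:ℝ) - 1 - L ≤ -(Real.log q / Real.log (1 + H)) := by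
        have := hMlt; simp only [hadef] at this; linarith
      calc ((M:ℝ) - 1 - L) * Real.log (1 + H)
          ≤ (-(Real.log q / Real.log (1 + H))) * Real.log (1 + H) := by
            exact mul_le_mul_of_nonneg_right h1 hlog1H.le
        _ = -Real.log q := by field_simp
    calc q * (1 + H) ^ (M - 1 - L)
        = Real.exp (Real.log q + ((M - 1 - L : ℕ) : ℝ) * Real.log (1 + H)) := by
          rw [Real.exp_add, Real.exp_log hq0, pow_exp]
      _ ≤ Real.exp 0 := Real.exp_le_exp.mpr (by linarith)
      _ = 1 := Real.exp_zero
  have hx1 : ∀ i : ℕ, i ≤ L → duranX0 H ε i = (i:ℝ) * H * ε := by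
    intro i hi; simp [duranX0, hLdef.symm ▸ hi]
  have hx2 : ∀ i : ℕ, L ≤ i → i < M → duranX0 H ε i = q * (1 + H) ^ (i - L) := by
    intro i hiL hiM
    rcases eq_or_lt_of_le hiL with h | h
    · rw [hx1 i (h ▸ le_rfl), ← h]
      simp only [Nat.sub_self, pow_zero, mul_one, hqdef]; ring
    · unfold duranX0
      rw [if_neg (by omega), if_pos (by exact hiM)]
  have hxM : duranX0 H ε M = 1 := by
    unfold duranX0; rw [if_neg (by omega), if_neg (by omega)]
  refine ⟨by simp [hx1 0 (Nat.zero_le L)], hxM, ?_⟩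
  intro i hi1 hiM
  have honeH : (1:ℝ) ≤ 1 + H := by linarith
  by_cases hA : i ≤ L
  · rw [hx1 i hA, hx1 (i-1) (by omega)]
    have hcasti : ((i - 1 : ℕ) : ℝ) = (i:ℝ) - 1 := by
      push_cast [Nat.cast_sub hi1]; ring
    have hi1R : (1:ℝ) ≤ (i:ℝ) := by exact_mod_cast hi1
    have hiLR : (i:ℝ) ≤ (L:ℝ) := by exact_mod_cast hA
    refine ⟨by positivity, by rw [hcasti]; nlinarith, ?_,
      Or.inl (le_of_eq (by rw [hcasti]; ring))⟩
    · nlinarith [hc, hiLR, hε0, hH0]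
  · by_cases hB : i < M
    · have hxi := hx2 i (by omega) hB
      have hxim := hx2 (i-1) (by omega) (by omega)
      have hstep : duranX0 H ε i = (1 + H) * duranX0 H ε (i-1) := by
        rw [hxi, hxim]
        have : i - L = (i - 1 - L) + 1 := by omega
        rw [this, pow_succ]; ring
      have hpow0 : (0:ℝ) ≤ (1+H) ^ (i - 1 - L) := by positivity
      have hxim0 : 0 ≤ duranX0 H ε (i-1) := by rw [hxim]; positivity
      refine ⟨hxim0, by rw [hstep]; nlinarith, ?_, Or.inr (by rw [hstep]; ring_nf; linarith)⟩
      · rw [hxi]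
        calc q * (1 + H) ^ (i - L) ≤ q * (1 + H) ^ (M - 1 - L) := by
              apply mul_le_mul_of_nonneg_left _ hq0.le
              exact pow_le_pow_right₀ honeH (by omega)
          _ ≤ 1 := key_le
    · have hiM' : i = M := by omega
      subst hiM'
      have hxim := hx2 (M-1) (by omega) (by omega)
      have hxim0 : 0 ≤ duranX0 H ε (M-1) := by rw [hxim]; positivity
      have hfull : (1 + H) * duranX0 H ε (M-1) = q * (1 + H) ^ (M - L) := by
        rw [hxim]
        have : M - L = (M - 1 - L) + 1 := by omega
        rw [this, pow_succ]; ring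
      have hle1 : duranX0 H ε (M-1) ≤ 1 := by rw [hxim]; exact key_le
      refine ⟨hxim0, by rw [hxM]; exact hle1, le_of_eq hxM, Or.inr ?_⟩
      rw [hxM]
      nlinarith [key_ge, hfull]

/- ======================= main theorem ======================= -/

/-- L² interpolation estimate for the boundary layer `E` on the Durán mesh:
`‖E − IE‖_{L²(0,1)} ≤ C ε^{1/2} H^{k+1}` with `C = C(k,β,C₀)` independent of `ε` and `H`. -/
theorem layer_interpolation_L2 (k : ℕ) (hk : 1 ≤ k) (β C0 : ℝ) (hβ : 0 < β) (hC0 : 0 ≤ C0) :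
    ∃ C : ℝ, 0 < C ∧
      ∀ H ε : ℝ, H ∈ Set.Ioo (0:ℝ) 1 → ε ∈ Set.Ioo (0:ℝ) 1 → H * ε * mL H < 1 →
      ∀ I : (ℝ → ℝ) → ℝ → ℝ, PerCell k C0 (duranX H ε) (2 * mM H ε) I →
      ∀ E : ℝ → ℝ, ContDiff ℝ (k + 1) E →
        (∀ x ∈ Set.Icc (0:ℝ) 1,
          |iteratedDeriv (k + 1) E x| ≤ ε ^ (-(k + 1 : ℤ)) * Real.exp (-β * x / ε)) →
        l2norm (fun y => E y - I E y) 0 1 ≤ C * Real.sqrt ε * H ^ (k + 1) := by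
  classical
  set p := k + 1 with hp
  set K := max 1 ((Nat.factorial (2 * p) : ℝ) / β ^ (2 * p)) with hKdef
  have hK1 : (1:ℝ) ≤ K := le_max_left _ _
  have hK0 : (0:ℝ) < K := lt_of_lt_of_le one_pos hK1
  refine ⟨C0 * Real.sqrt (K / β) + 1, by positivity, ?_⟩
  intro H ε hH hε hc I hI E hE hEb
  have hH0 := hH.1
  have hH1 := hH.2
  have hε0 := hε.1
  have hε1 := hε.2
  set C := C0 * Real.sqrt (K / β) + 1 with hCdef
  have hCpos : 0 < C := by positivity
  have hRHS0 : 0 ≤ C * Real.sqrt ε * H ^ p := by positivity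
  by_cases hint : IntervalIntegrable (fun x => (E x - I E x) ^ 2) MeasureTheory.volume 0 1
  · obtain ⟨hx0, hxM, hcellm⟩ := aux_duran_mesh hH hε hc
    set M := mM H ε with hM
    set X : ℕ → ℝ := duranX H ε with hX
    have hXeq : ∀ i, i ≤ M → X i = duranX0 H ε i := by
      intro i hi
      show duranX H ε i = duranX0 H ε i
      unfold duranX
      rw [if_pos (show i ≤ mM H ε from hi)]
    have hX0 : X 0 = 0 := by rw [hXeq 0 (Nat.zero_le M), hx0]
    have hXM : X M = 1 := by rw [hXeq M le_rfl, hxM]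
    have hfacts : ∀ j, j < M → 0 ≤ X j ∧ X j ≤ X (j+1) ∧ X (j+1) ≤ 1 ∧
        (X (j+1) - X j ≤ H * ε ∨ X (j+1) - X j ≤ H * X j) := by
      intro j hj
      have := hcellm (j+1) (by omega) (by omega)
      rw [hXeq j (by omega), hXeq (j+1) (by omega)]
      simpa [Nat.add_sub_cancel] using this
    set f : ℝ → ℝ := fun x => (E x - I E x) ^ 2 with hf
    have hcellint : ∀ j, j < M → IntervalIntegrable f MeasureTheory.volume (X j) (X (j+1)) := by
      intro j hj
      obtain ⟨h1, h2, h3, _⟩ := hfacts j hj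
      refine hint.mono_set ?_
      rw [Set.uIcc_of_le h2, Set.uIcc_of_le zero_le_one]
      exact Set.Icc_subset_Icc h1 h3
    have hsplit := intervalIntegral.sum_integral_adjacent_intervals
      (μ := MeasureTheory.volume) (a := X) (f := f) hcellint
    have hG : Continuous (iteratedDeriv p E) :=
      hE.continuous_iteratedDeriv p (by exact_mod_cast le_rfl)
    have hexpint : ∀ a b : ℝ, IntervalIntegrable (fun x => Real.exp (-β * x / ε))
        MeasureTheory.volume a b := fun a b => aux_exp_cont.intervalIntegrable a b
    have hAj : ∀ j, j < M → (∫ x in X j..X (j+1), f x) ≤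
        C0 ^ 2 * (H ^ p) ^ 2 * K * ∫ x in X j..X (j+1), Real.exp (-β * x / ε) := by
      intro j hj
      obtain ⟨hu0, huv, hv1, hwidth⟩ := hfacts j hj
      set u := X j with hu
      set v := X (j+1) with hv
      have hper := (hI E hE (j+1) (by omega) (by omega)).1 p (by omega) (by omega)
      simp only [Nat.add_sub_cancel] at hper
      set h := v - u with hhd
      have hh0 : 0 ≤ h := by rw [hhd]; linarith
      have hA0 : 0 ≤ ∫ x in u..v, f x :=
        intervalIntegral.integral_nonneg huv (fun x _ => sq_nonneg _)
      have hB0 : 0 ≤ ∫ x in u..v, (iteratedDeriv p E x) ^ 2 :=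
        intervalIntegral.integral_nonneg huv (fun x _ => sq_nonneg _)
      have hper' : Real.sqrt (∫ x in u..v, f x) ≤
          C0 * h ^ p * Real.sqrt (∫ x in u..v, (iteratedDeriv p E x) ^ 2) := hper
      have step1 : (∫ x in u..v, f x) ≤
          C0 ^ 2 * (h ^ p) ^ 2 * ∫ x in u..v, (iteratedDeriv p E x) ^ 2 := by
        have h2 := pow_le_pow_left₀ (Real.sqrt_nonneg _) hper' 2
        rw [Real.sq_sqrt hA0] at h2
        calc (∫ x in u..v, f x)
            ≤ (C0 * h ^ p * Real.sqrt (∫ x in u..v, (iteratedDeriv p E x) ^ 2)) ^ 2 := h2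
          _ = C0 ^ 2 * (h ^ p) ^ 2 *
              Real.sqrt (∫ x in u..v, (iteratedDeriv p E x) ^ 2) ^ 2 := by ring
          _ = C0 ^ 2 * (h ^ p) ^ 2 * ∫ x in u..v, (iteratedDeriv p E x) ^ 2 := by
              rw [Real.sq_sqrt hB0]
      have hBle : (∫ x in u..v, (iteratedDeriv p E x) ^ 2) ≤
          ∫ x in u..v, ((ε ^ p)⁻¹ * Real.exp (-β * x / ε)) ^ 2 := by
        apply intervalIntegral.integral_mono_on huv
          ((hG.pow 2).intervalIntegrable u v)
          (Continuous.intervalIntegrable (by fun_prop) u v)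
        intro x hx
        have hx01 : x ∈ Set.Icc (0:ℝ) 1 := ⟨le_trans hu0 hx.1, le_trans hx.2 hv1⟩
        have hb := hEb x hx01
        have hzp : ε ^ (-(k + 1 : ℤ)) = (ε ^ p)⁻¹ := by
          rw [show (-(k + 1 : ℤ)) = -((p : ℕ) : ℤ) from by push_cast [hp]; ring,
            zpow_neg, zpow_natCast]
        rw [hzp] at hb
        calc (iteratedDeriv p E x) ^ 2 = |iteratedDeriv p E x| ^ 2 := (sq_abs _).symm
          _ ≤ ((ε ^ p)⁻¹ * Real.exp (-β * x / ε)) ^ 2 :=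
              pow_le_pow_left₀ (abs_nonneg _) hb 2
      calc (∫ x in u..v, f x)
          ≤ C0 ^ 2 * (h ^ p) ^ 2 * ∫ x in u..v, (iteratedDeriv p E x) ^ 2 := step1
        _ ≤ C0 ^ 2 * (h ^ p) ^ 2 *
            ∫ x in u..v, ((ε ^ p)⁻¹ * Real.exp (-β * x / ε)) ^ 2 :=
              mul_le_mul_of_nonneg_left hBle (by positivity)
        _ = C0 ^ 2 * ∫ x in u..v, (h ^ p) ^ 2 * ((ε ^ p)⁻¹ * Real.exp (-β * x / ε)) ^ 2 := by
            rw [intervalIntegral.integral_const_mul]; ring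
        _ ≤ C0 ^ 2 * ∫ x in u..v, (H ^ p) ^ 2 * K * Real.exp (-β * x / ε) := by
            apply mul_le_mul_of_nonneg_left _ (by positivity)
            apply intervalIntegral.integral_mono_on huv
              (Continuous.intervalIntegrable (by fun_prop) u v)
              (Continuous.intervalIntegrable (by fun_prop) u v)
            intro x hx
            rw [hKdef]
            exact aux_cell_pointwise p hβ hε0 hH0 hu0 hx.1 hwidth hh0
        _ = C0 ^ 2 * (H ^ p) ^ 2 * K * ∫ x in u..v, Real.exp (-β * x / ε) := by
            rw [intervalIntegral.integral_const_mul]; ring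
    have hsum : (∫ x in (0:ℝ)..1, f x) ≤ C0 ^ 2 * (H ^ p) ^ 2 * K * (ε / β) := by
      have e1 : (∫ x in (0:ℝ)..1, f x) = ∑ j ∈ Finset.range M, ∫ x in X j..X (j+1), f x := by
        rw [hsplit, hX0, hXM]
      have e2 : (∑ j ∈ Finset.range M, ∫ x in X j..X (j+1), f x) ≤
          ∑ j ∈ Finset.range M,
            C0 ^ 2 * (H ^ p) ^ 2 * K * ∫ x in X j..X (j+1), Real.exp (-β * x / ε) :=
        Finset.sum_le_sum fun j hj => hAj j (Finset.mem_range.mp hj)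
      have e3 : (∑ j ∈ Finset.range M,
            C0 ^ 2 * (H ^ p) ^ 2 * K * ∫ x in X j..X (j+1), Real.exp (-β * x / ε)) =
          C0 ^ 2 * (H ^ p) ^ 2 * K * ∫ x in (0:ℝ)..1, Real.exp (-β * x / ε) := by
        rw [← Finset.mul_sum,
          intervalIntegral.sum_integral_adjacent_intervals (fun j _ => hexpint _ _),
          hX0, hXM]
      have e4 := aux_exp_integral_le (β := β) (ε := ε) hβ hε0
      have hnn : (0:ℝ) ≤ C0 ^ 2 * (H ^ p) ^ 2 * K := by positivity
      calc (∫ x in (0:ℝ)..1, f x)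
          = ∑ j ∈ Finset.range M, ∫ x in X j..X (j+1), f x := e1
        _ ≤ ∑ j ∈ Finset.range M,
            C0 ^ 2 * (H ^ p) ^ 2 * K * ∫ x in X j..X (j+1), Real.exp (-β * x / ε) := e2
        _ = C0 ^ 2 * (H ^ p) ^ 2 * K * ∫ x in (0:ℝ)..1, Real.exp (-β * x / ε) := e3
        _ ≤ C0 ^ 2 * (H ^ p) ^ 2 * K * (ε / β) := mul_le_mul_of_nonneg_left e4 hnn
    have hCsq : C0 ^ 2 * (H ^ p) ^ 2 * K * (ε / β) ≤ (C * Real.sqrt ε * H ^ p) ^ 2 := by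
      have h1 : Real.sqrt (K / β) ^ 2 = K / β := Real.sq_sqrt (by positivity)
      have h2 : Real.sqrt ε ^ 2 = ε := Real.sq_sqrt hε0.le
      have hs0 : 0 ≤ Real.sqrt (K / β) := Real.sqrt_nonneg _
      have h3 : C0 ^ 2 * (K / β) ≤ C ^ 2 := by
        rw [hCdef]; nlinarith [h1, hs0, hC0]
      calc C0 ^ 2 * (H ^ p) ^ 2 * K * (ε / β)
          = (C0 ^ 2 * (K / β)) * (ε * (H ^ p) ^ 2) := by ring
        _ ≤ C ^ 2 * (ε * (H ^ p) ^ 2) :=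
            mul_le_mul_of_nonneg_right h3 (by positivity)
        _ = (C * Real.sqrt ε * H ^ p) ^ 2 := by rw [mul_pow, mul_pow, h2]; ring
    have hfin : l2norm (fun y => E y - I E y) 0 1 =
        Real.sqrt (∫ x in (0:ℝ)..1, f x) := rfl
    rw [hfin]
    calc Real.sqrt (∫ x in (0:ℝ)..1, f x)
        ≤ Real.sqrt ((C * Real.sqrt ε * H ^ p) ^ 2) :=
          Real.sqrt_le_sqrt (le_trans hsum hCsq)
      _ = C * Real.sqrt ε * H ^ p := Real.sqrt_sq hRHS0
  · have hzero : l2norm (fun y => E y - I E y) 0 1 = 0 := by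
      unfold l2norm
      rw [intervalIntegral.integral_undef hint, Real.sqrt_zero]
    rw [hzero]
    exact hRHS0
end

section
/- Let k ≥ 1 be an integer, β > 0, H ∈ (0,1), ε ∈ (0,1) with ⌈1/H⌉Hε < 1, and let x_0,…,x_{2M} be the Durán mesh. Let I be an interpolation operator satisfying the per-cell estimates with constant C₀, and let W ∈ C^{k+1}([1,2]) satisfy |W^{(k+1)}(x)| ≤ ε^{1−(k+1)} e^{−β(x−1)/ε} for x ∈ [1,2]. Then there is a constant C = C(k,β,C₀), independent of ε and H, with ‖W − IW‖_{L²(1,2)} ≤ C ε^{3/2} H^{k+1} and ‖(W − IW)'‖_{L²(1,2)} ≤ C ε^{1/2} H^{k}. -/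
open MeasureTheory Set

lemma duranX0_zero (H ε : ℝ) : duranX0 H ε 0 = 0 := by simp [duranX0]

section Mesh

variable {H ε : ℝ} (hH : H ∈ Set.Ioo (0:ℝ) 1) (hε : ε ∈ Set.Ioo (0:ℝ) 1)
  (hP : H * ε * mL H < 1)

include hH hε hP

lemma mL_pos : 0 < (mL H : ℝ) := by
  have : 1 ≤ mL H := Nat.one_le_ceil_iff.2 (by have := hH.1; positivity)
  exact_mod_cast Nat.lt_of_lt_of_le Nat.zero_lt_one this

lemma HL_ge_one : 1 ≤ H * (mL H : ℝ) := by
  have h1 : (1:ℝ)/H ≤ (mL H : ℝ) := Nat.le_ceil _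
  have h0 := hH.1
  calc (1:ℝ) = H * (1/H) := by field_simp
  _ ≤ H * mL H := by gcongr

lemma P_pos : 0 < H * ε * (mL H : ℝ) := by
  have := mL_pos hH hε hP
  have := hH.1; have := hε.1
  positivity

lemma log_ratio_neg : Real.log (H * ε * mL H) / Real.log (1 + H) < 0 :=
  div_neg_of_neg_of_pos (Real.log_neg (P_pos hH hε hP) hP)
    (Real.log_pos (by linarith [hH.1]))

lemma mL_lt_mM : mL H < mM H ε := by
  have hr := log_ratio_neg hH hε hP
  exact Nat.lt_ceil.2 (by linarith)

lemma duranX0_mM : duranX0 H ε (mM H ε) = 1 := by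
  have h := mL_lt_mM hH hε hP
  rw [duranX0, if_neg (by omega), if_neg (by omega)]

/-- geometric closed form -/
lemma duranX0_geo {i : ℕ} (h1 : mL H ≤ i) (h2 : i < mM H ε) :
    duranX0 H ε i = H * ε * (mL H : ℝ) * (1 + H) ^ (i - mL H) := by
  rcases eq_or_lt_of_le h1 with h | h
  · rw [duranX0, if_pos (le_of_eq h.symm), ← h]
    simp [Nat.sub_self]
    ring
  · rw [duranX0, if_neg (by omega), if_pos h2]

lemma geo_lt_one {i : ℕ} (h1 : mL H ≤ i) (h2 : (i : ℝ) < (mL H : ℝ) - Real.log (H * ε * mL H) / Real.log (1 + H)) :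
    H * ε * (mL H : ℝ) * (1 + H) ^ (i - mL H) < 1 := by
  have hP0 := P_pos hH hε hP
  have h1H : (0:ℝ) < 1 + H := by linarith [hH.1]
  have hlog1H : 0 < Real.log (1 + H) := Real.log_pos (by linarith [hH.1])
  have hpow : (0:ℝ) < (1 + H) ^ (i - mL H) := by positivity
  have hkey : Real.log (H * ε * (mL H:ℝ) * (1 + H) ^ (i - mL H)) < 0 := by
    rw [Real.log_mul (ne_of_gt hP0) (ne_of_gt hpow), Real.log_pow]
    have hc : ((i - mL H : ℕ) : ℝ) = (i : ℝ) - (mL H : ℝ) := by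
      rw [Nat.cast_sub h1]
    rw [hc]
    have h4 : (i:ℝ) - (mL H:ℝ) < (-Real.log (H * ε * mL H)) / Real.log (1 + H) := by
      rw [neg_div]; linarith
    have h3 := (lt_div_iff₀ hlog1H).1 h4
    linarith
  calc H * ε * (mL H:ℝ) * (1 + H) ^ (i - mL H)
      = Real.exp (Real.log (H * ε * (mL H:ℝ) * (1 + H) ^ (i - mL H))) :=
        (Real.exp_log (by positivity)).symm
    _ < Real.exp 0 := Real.exp_lt_exp.2 hkey
    _ = 1 := Real.exp_zero

lemma geo_last_ge : 1 ≤ H * ε * (mL H : ℝ) * (1 + H) ^ (mM H ε - 1 - mL H) * (1 + H) := by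
  have hP0 := P_pos hH hε hP
  have hLM := mL_lt_mM hH hε hP
  have h1H : (0:ℝ) < 1 + H := by linarith [hH.1]
  have hlog1H : 0 < Real.log (1 + H) := Real.log_pos (by linarith [hH.1])
  have hMle : ((mL H : ℝ) - Real.log (H * ε * mL H) / Real.log (1 + H)) ≤ (mM H ε : ℝ) :=
    Nat.le_ceil _
  have hpowe : (1 + H) ^ (mM H ε - 1 - mL H) * (1 + H) = (1 + H) ^ (mM H ε - mL H) := by
    rw [← pow_succ]
    congr 1
    omega
  have hrw : H * ε * (mL H:ℝ) * (1 + H) ^ (mM H ε - 1 - mL H) * (1 + H)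
      = H * ε * (mL H:ℝ) * (1 + H) ^ (mM H ε - mL H) := by rw [← hpowe]; ring
  rw [hrw]
  have hpow : (0:ℝ) < (1 + H) ^ (mM H ε - mL H) := by positivity
  have hkey : 0 ≤ Real.log (H * ε * (mL H:ℝ) * (1 + H) ^ (mM H ε - mL H)) := by
    rw [Real.log_mul (ne_of_gt hP0) (ne_of_gt hpow), Real.log_pow]
    have hc : ((mM H ε - mL H : ℕ) : ℝ) = (mM H ε : ℝ) - (mL H : ℝ) := by
      rw [Nat.cast_sub (le_of_lt hLM)]
    rw [hc]
    have h4 : (-Real.log (H * ε * mL H)) / Real.log (1 + H) ≤ (mM H ε : ℝ) - (mL H:ℝ) := by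
      rw [neg_div]; linarith
    have h3 := (div_le_iff₀ hlog1H).1 h4
    linarith
  calc (1:ℝ) = Real.exp 0 := Real.exp_zero.symm
    _ ≤ Real.exp (Real.log (H * ε * (mL H:ℝ) * (1 + H) ^ (mM H ε - mL H))) :=
        Real.exp_le_exp.2 hkey
    _ = _ := Real.exp_log (by positivity)

end Mesh

lemma tbound {a ε : ℝ} (ha : 0 < a) (hε : 0 < ε) {y : ℝ} (hy : 0 ≤ y) :
    y ≤ 1/a * ε * Real.exp (a * y / ε) := by
  have h1 : a * y / ε ≤ Real.exp (a * y / ε) := by linarith [Real.add_one_le_exp (a*y/ε)]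
  have h2 : a * y ≤ Real.exp (a * y / ε) * ε := (div_le_iff₀ hε).1 h1
  calc y = 1/a * (a * y) := by field_simp
    _ ≤ 1/a * (Real.exp (a * y / ε) * ε) := by
        apply mul_le_mul_of_nonneg_left h2 (by positivity)
    _ = 1/a * ε * Real.exp (a * y / ε) := by ring

lemma duran_cell {H ε : ℝ} (hH : H ∈ Set.Ioo (0:ℝ) 1) (hε : ε ∈ Set.Ioo (0:ℝ) 1)
    (hP : H * ε * mL H < 1) {a : ℝ} (ha : 0 < a) {j : ℕ} (hj1 : 1 ≤ j) (hj2 : j ≤ mM H ε) :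
    0 ≤ duranX0 H ε (j-1) ∧ duranX0 H ε (j-1) ≤ duranX0 H ε j ∧ duranX0 H ε j ≤ 1 ∧
    duranX0 H ε j - duranX0 H ε (j-1) ≤
      (1 + 1/a) * ε * H * Real.exp (a * duranX0 H ε (j-1) / ε) := by
  obtain ⟨hH0, hH1⟩ := hH
  obtain ⟨hε0, hε1⟩ := hε
  have hP0 : 0 < H * ε * (mL H : ℝ) := P_pos ⟨hH0, hH1⟩ ⟨hε0, hε1⟩ hP
  have hLM : mL H < mM H ε := mL_lt_mM ⟨hH0, hH1⟩ ⟨hε0, hε1⟩ hP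
  have h1a : (0:ℝ) < 1/a := by positivity
  have hexp1 : ∀ y : ℝ, 0 ≤ y → 1 ≤ Real.exp (a * y / ε) := fun y hy =>
    Real.one_le_exp (by positivity)
  by_cases hjL : j ≤ mL H
  · -- fine region
    have e1 : duranX0 H ε j = (j:ℝ) * H * ε := by rw [duranX0, if_pos hjL]
    have e0 : duranX0 H ε (j-1) = ((j-1:ℕ):ℝ) * H * ε := by
      rw [duranX0, if_pos (le_trans (Nat.sub_le _ _) hjL)]
    have hc : ((j-1:ℕ):ℝ) = (j:ℝ) - 1 := by
      rw [Nat.cast_sub hj1]; norm_num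
    have h00 : 0 ≤ duranX0 H ε (j-1) := by rw [e0]; positivity
    have hmono : duranX0 H ε (j-1) ≤ duranX0 H ε j := by
      rw [e0, e1, hc]; nlinarith [mul_pos hH0 hε0]
    have hle1 : duranX0 H ε j ≤ 1 := by
      rw [e1]
      have hjL' : (j:ℝ) ≤ (mL H : ℝ) := Nat.cast_le.2 hjL
      nlinarith
    refine ⟨h00, hmono, hle1, ?_⟩
    have hE := hexp1 _ h00
    rw [e0, e1, hc]
    have hd : (j:ℝ) * H * ε - ((j:ℝ) - 1) * H * ε = ε * H := by ring
    rw [hd]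
    have hj0 : (0:ℝ) ≤ (j:ℝ) - 1 := by rw [← hc]; positivity
    have hE' : 1 ≤ Real.exp (a * (((j:ℝ) - 1) * H * ε) / ε) := hexp1 _ (by positivity)
    nlinarith [hE', h1a, mul_pos hε0 hH0,
      mul_pos (mul_pos hε0 hH0) (Real.exp_pos (a * (((j:ℝ) - 1) * H * ε) / ε))]
  · -- geometric region and last cell
    push_neg at hjL
    have hgeo0 : duranX0 H ε (j-1) = H * ε * (mL H : ℝ) * (1 + H) ^ (j - 1 - mL H) :=
      duranX0_geo ⟨hH0, hH1⟩ ⟨hε0, hε1⟩ hP (by omega) (by omega)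
    have h00 : 0 ≤ duranX0 H ε (j-1) := by rw [hgeo0]; positivity
    have hE := hexp1 _ h00
    have htb : duranX0 H ε (j-1) ≤ 1/a * ε * Real.exp (a * duranX0 H ε (j-1) / ε) :=
      tbound ha hε0 h00
    by_cases hjM : j < mM H ε
    · have hgeo1 : duranX0 H ε j = H * ε * (mL H : ℝ) * (1 + H) ^ (j - mL H) :=
        duranX0_geo ⟨hH0, hH1⟩ ⟨hε0, hε1⟩ hP (by omega) hjM
      have hd : duranX0 H ε j = duranX0 H ε (j-1) * (1 + H) := by
        rw [hgeo0, hgeo1]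
        have : (1 + H) ^ (j - mL H) = (1 + H) ^ (j - 1 - mL H) * (1 + H) := by
          rw [← pow_succ]; congr 1; omega
        rw [this]; ring
      have hmono : duranX0 H ε (j-1) ≤ duranX0 H ε j := by
        rw [hd]; nlinarith
      have hle1 : duranX0 H ε j ≤ 1 := by
        rw [hgeo1]
        have hjlt : (j:ℝ) < (mL H : ℝ) - Real.log (H * ε * mL H) / Real.log (1 + H) := by
          have h5 : j ≤ mM H ε - 1 := by omega
          have h6 : ((mM H ε - 1 : ℕ):ℝ) < (mL H : ℝ) - Real.log (H * ε * mL H) / Real.log (1 + H) := by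
            have hx : mM H ε - 1 < mM H ε := by omega
            exact Nat.lt_ceil.1 hx
          have h7 : (j:ℝ) ≤ ((mM H ε - 1 : ℕ):ℝ) := Nat.cast_le.2 h5
          linarith
        exact le_of_lt (geo_lt_one ⟨hH0, hH1⟩ ⟨hε0, hε1⟩ hP (by omega) hjlt)
      refine ⟨h00, hmono, hle1, ?_⟩
      have hd2 : duranX0 H ε j - duranX0 H ε (j-1) = H * duranX0 H ε (j-1) := by
        rw [hd]; ring
      rw [hd2]
      calc H * duranX0 H ε (j-1)
          ≤ H * (1/a * ε * Real.exp (a * duranX0 H ε (j-1) / ε)) :=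
            mul_le_mul_of_nonneg_left htb hH0.le
        _ = 1/a * (ε * H * Real.exp (a * duranX0 H ε (j-1) / ε)) := by ring
        _ ≤ (1 + 1/a) * ε * H * Real.exp (a * duranX0 H ε (j-1) / ε) := by
            nlinarith [mul_pos (mul_pos hε0 hH0) (Real.exp_pos (a * duranX0 H ε (j-1) / ε))]
    · -- last cell : j = mM
      have hjM' : j = mM H ε := by omega
      have e1 : duranX0 H ε j = 1 := by rw [hjM']; exact duranX0_mM ⟨hH0, hH1⟩ ⟨hε0, hε1⟩ hP
      have hlt1 : duranX0 H ε (j-1) < 1 := by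
        rw [hgeo0]
        apply geo_lt_one ⟨hH0, hH1⟩ ⟨hε0, hε1⟩ hP (by omega)
        have h6 : ((mM H ε - 1 : ℕ):ℝ) < (mL H : ℝ) - Real.log (H * ε * mL H) / Real.log (1 + H) := by
          have hx : mM H ε - 1 < mM H ε := by omega
          exact Nat.lt_ceil.1 hx
        have : ((j - 1 : ℕ):ℝ) = ((mM H ε - 1 : ℕ):ℝ) := by rw [hjM']
        linarith [this ▸ h6]
      have hlast : 1 ≤ duranX0 H ε (j-1) * (1 + H) := by
        rw [hgeo0]
        have := geo_last_ge (H := H) (ε := ε) ⟨hH0, hH1⟩ ⟨hε0, hε1⟩ hP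
        have hc : j - 1 - mL H = mM H ε - 1 - mL H := by omega
        rw [hc]; linarith
      refine ⟨h00, by rw [e1]; linarith, le_of_eq e1, ?_⟩
      rw [e1]
      have hd3 : 1 - duranX0 H ε (j-1) ≤ H * duranX0 H ε (j-1) := by nlinarith
      calc 1 - duranX0 H ε (j-1) ≤ H * duranX0 H ε (j-1) := hd3
        _ ≤ H * (1/a * ε * Real.exp (a * duranX0 H ε (j-1) / ε)) :=
            mul_le_mul_of_nonneg_left htb hH0.le
        _ = 1/a * (ε * H * Real.exp (a * duranX0 H ε (j-1) / ε)) := by ring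
        _ ≤ (1 + 1/a) * ε * H * Real.exp (a * duranX0 H ε (j-1) / ε) := by
            nlinarith [mul_pos (mul_pos hε0 hH0) (Real.exp_pos (a * duranX0 H ε (j-1) / ε))]

lemma duranX_shift {H ε : ℝ} (hH : H ∈ Set.Ioo (0:ℝ) 1) (hε : ε ∈ Set.Ioo (0:ℝ) 1)
    (hP : H * ε * mL H < 1) {n : ℕ} (hn : n ≤ mM H ε) :
    duranX H ε (mM H ε + n) = 1 + duranX0 H ε n := by
  rcases Nat.eq_zero_or_pos n with h | h
  · subst h
    rw [duranX0_zero, Nat.add_zero, duranX, if_pos le_rfl, duranX0_mM hH hε hP]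
    norm_num
  · rw [duranX, if_neg (by omega)]
    congr 1
    congr 1
    omega

lemma exp_integral_le {β ε : ℝ} (hβ : 0 < β) (hε : 0 < ε) :
    ∫ x in (1:ℝ)..2, Real.exp (-β * (x - 1) / ε) ≤ ε / β := by
  have hF : ∀ x ∈ Set.uIcc (1:ℝ) 2,
      HasDerivAt (fun x => -(ε/β) * Real.exp (-β * (x-1)/ε)) (Real.exp (-β * (x - 1) / ε)) x := by
    intro x _
    have h1 : HasDerivAt (fun x : ℝ => -β * (x - 1) / ε) (-β / ε) x := by
      have := (((hasDerivAt_id x).sub_const 1).const_mul (-β)).div_const ε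
      simpa using this
    have h3 := (h1.exp).const_mul (-(ε/β))
    refine h3.congr_deriv ?_
    field_simp
  have hcont : Continuous fun x : ℝ => Real.exp (-β * (x-1)/ε) := by continuity
  rw [intervalIntegral.integral_eq_sub_of_hasDerivAt hF (hcont.intervalIntegrable _ _)]
  have h4 : -β * ((1:ℝ) - 1) / ε = 0 := by ring
  rw [h4, Real.exp_zero]
  have hb : 0 < ε/β := by positivity
  nlinarith [Real.exp_pos (-β * ((2:ℝ) - 1) / ε)]

lemma l2_sq_le {f g : ℝ → ℝ} {u w c : ℝ} (huw : u ≤ w) (hc : 0 ≤ c)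
    (hl : l2norm f u w ≤ c * l2norm g u w) (hg : 0 ≤ ∫ x in u..w, (g x)^2) :
    ∫ x in u..w, (f x)^2 ≤ c^2 * ∫ x in u..w, (g x)^2 := by
  have h0 : 0 ≤ ∫ x in u..w, (f x)^2 :=
    intervalIntegral.integral_nonneg huw (fun x _ => sq_nonneg _)
  calc ∫ x in u..w, (f x)^2 = (l2norm f u w)^2 := by rw [l2norm, Real.sq_sqrt h0]
    _ ≤ (c * l2norm g u w)^2 := pow_le_pow_left₀ (Real.sqrt_nonneg _) hl 2
    _ = c^2 * (l2norm g u w)^2 := by ring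
    _ = c^2 * ∫ x in u..w, (g x)^2 := by rw [l2norm, Real.sq_sqrt hg]

lemma pointwise_bound {k s : ℕ} {β ε H C0 C₁ h y x d : ℝ} (hβ : 0 < β) (hε0 : 0 < ε)
    (hH0 : 0 < H) (hC0 : 0 ≤ C0) (hC₁ : 1 ≤ C₁) (hs : s ≤ k + 1) (hy : 0 ≤ y)
    (hyx : y ≤ x - 1) (hh0 : 0 ≤ h)
    (hh : h ≤ C₁ * ε * H * Real.exp (β/(2*((k:ℝ)+1)) * y / ε))
    (hD : |d| ≤ ε ^ ((1:ℤ) - (k + 1)) * Real.exp (-β * (x - 1) / ε)) :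
    (C0 * h ^ s)^2 * d^2 ≤
      (C0 * C₁^(k+1) * H^s * (ε^s * (ε^k)⁻¹))^2 * Real.exp (-β * (x - 1) / ε) := by
  have hzp : ε ^ ((1:ℤ) - ((k:ℤ) + 1)) = (ε^k)⁻¹ := by
    rw [show (1:ℤ) - ((k:ℤ)+1) = -(k:ℤ) by ring, zpow_neg, zpow_natCast]
  rw [hzp] at hD
  have hq0 : 0 < Real.exp (-β * (x - 1) / ε) := Real.exp_pos _
  have hd2 : d^2 ≤ ((ε^k)⁻¹ * Real.exp (-β * (x - 1) / ε))^2 := by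
    calc d^2 = |d|^2 := (sq_abs d).symm
      _ ≤ _ := pow_le_pow_left₀ (abs_nonneg d) hD 2
  have hk1 : (0:ℝ) < (k:ℝ) + 1 := by positivity
  have hC₁0 : (0:ℝ) ≤ C₁ := by linarith
  have hhs : h^s ≤ C₁^(k+1) * ε^s * H^s * Real.exp (β * y / (2*ε)) := by
    have e1 : Real.exp (β/(2*((k:ℝ)+1)) * y / ε)^s
        = Real.exp ((s:ℝ) * (β/(2*((k:ℝ)+1)) * y / ε)) := by
      rw [← Real.exp_nat_mul]
    have hsle : (s:ℝ) ≤ (k:ℝ)+1 := by exact_mod_cast hs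
    have e2 : Real.exp ((s:ℝ) * (β/(2*((k:ℝ)+1)) * y / ε)) ≤ Real.exp (β * y / (2*ε)) := by
      apply Real.exp_le_exp.2
      rw [show (s:ℝ) * (β/(2*((k:ℝ)+1)) * y / ε) = (β*y/(2*ε)) * ((s:ℝ)/((k:ℝ)+1)) by
        field_simp]
      calc (β*y/(2*ε)) * ((s:ℝ)/((k:ℝ)+1)) ≤ (β*y/(2*ε)) * 1 :=
            mul_le_mul_of_nonneg_left ((div_le_one hk1).2 hsle) (by positivity)
        _ = β*y/(2*ε) := by ring
    have e3 : C₁^s ≤ C₁^(k+1) := pow_le_pow_right₀ hC₁ hs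
    calc h^s ≤ (C₁ * ε * H * Real.exp (β/(2*((k:ℝ)+1)) * y / ε))^s := pow_le_pow_left₀ hh0 hh s
      _ = C₁^s * ε^s * H^s * Real.exp (β/(2*((k:ℝ)+1)) * y / ε)^s := by ring
      _ ≤ C₁^(k+1) * ε^s * H^s * Real.exp (β/(2*((k:ℝ)+1)) * y / ε)^s := by
          apply mul_le_mul_of_nonneg_right _ (by positivity)
          apply mul_le_mul_of_nonneg_right _ (by positivity)
          exact mul_le_mul_of_nonneg_right e3 (by positivity)
      _ = C₁^(k+1) * ε^s * H^s * Real.exp ((s:ℝ) * (β/(2*((k:ℝ)+1)) * y / ε)) := by rw [e1]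
      _ ≤ C₁^(k+1) * ε^s * H^s * Real.exp (β * y / (2*ε)) :=
          mul_le_mul_of_nonneg_left e2 (by positivity)
  have hq2 : Real.exp (β*y/(2*ε))^2 * Real.exp (-β * (x - 1) / ε)^2
      ≤ Real.exp (-β * (x - 1) / ε) := by
    have e4 : Real.exp (β*y/(2*ε))^2 * Real.exp (-β * (x - 1) / ε)^2
        = Real.exp ((β*y/(2*ε) + β*y/(2*ε)) + ((-β*(x-1)/ε) + (-β*(x-1)/ε))) := by
      rw [sq, sq, ← Real.exp_add, ← Real.exp_add, ← Real.exp_add]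
    rw [e4]
    apply Real.exp_le_exp.2
    have e5 : β * y ≤ β * (x-1) := mul_le_mul_of_nonneg_left hyx hβ.le
    have e6 : β*y/ε ≤ β*(x-1)/ε := by
      rw [div_eq_mul_inv, div_eq_mul_inv]
      exact mul_le_mul_of_nonneg_right e5 (inv_nonneg.2 hε0.le)
    have e7 : β*y/(2*ε) = β*y/ε/2 := by ring
    have e8 : -β*(x-1)/ε = -(β*(x-1)/ε) := by ring
    rw [e7, e8]
    linarith
  calc (C0 * h^s)^2 * d^2
      ≤ (C0 * h^s)^2 * ((ε^k)⁻¹ * Real.exp (-β * (x - 1) / ε))^2 :=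
        mul_le_mul_of_nonneg_left hd2 (sq_nonneg _)
    _ = C0^2 * ((h^s)^2 * ((ε^k)⁻¹ * Real.exp (-β * (x - 1) / ε))^2) := by ring
    _ ≤ C0^2 * ((C₁^(k+1) * ε^s * H^s * Real.exp (β*y/(2*ε)))^2
          * ((ε^k)⁻¹ * Real.exp (-β * (x - 1) / ε))^2) := by
        apply mul_le_mul_of_nonneg_left _ (by positivity)
        exact mul_le_mul_of_nonneg_right (pow_le_pow_left₀ (by positivity) hhs 2) (sq_nonneg _)
    _ = (C0 * C₁^(k+1) * H^s * (ε^s * (ε^k)⁻¹))^2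
          * (Real.exp (β*y/(2*ε))^2 * Real.exp (-β * (x - 1) / ε)^2) := by ring
    _ ≤ (C0 * C₁^(k+1) * H^s * (ε^s * (ε^k)⁻¹))^2 * Real.exp (-β * (x - 1) / ε) :=
        mul_le_mul_of_nonneg_left hq2 (sq_nonneg _)

lemma layer_bound {k s : ℕ} {β C0 H ε : ℝ} (hβ : 0 < β) (hC0 : 0 ≤ C0)
    (hH : H ∈ Set.Ioo (0:ℝ) 1) (hε : ε ∈ Set.Ioo (0:ℝ) 1) (hP : H * ε * mL H < 1)
    (hs : s ≤ k + 1)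
    (φ D : ℝ → ℝ) (hD : Continuous D)
    (hDb : ∀ x ∈ Set.Icc (1:ℝ) 2, |D x| ≤ ε ^ ((1:ℤ) - (k + 1)) * Real.exp (-β * (x - 1) / ε))
    (hcell : ∀ n : ℕ, n < mM H ε →
      l2norm φ (duranX H ε (mM H ε + n)) (duranX H ε (mM H ε + n + 1)) ≤
        C0 * (duranX H ε (mM H ε + n + 1) - duranX H ε (mM H ε + n)) ^ s *
          l2norm D (duranX H ε (mM H ε + n)) (duranX H ε (mM H ε + n + 1))) :
    l2norm φ 1 2 ≤
      C0 * (1 + 2*((k:ℝ)+1)/β)^(k+1) * H^s * (ε^s * (ε^k)⁻¹) * Real.sqrt (ε/β) := by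
  obtain ⟨hH0, hH1⟩ := hH
  obtain ⟨hε0, hε1⟩ := hε
  set C₁ := 1 + 2*((k:ℝ)+1)/β with hC₁def
  have hC₁1 : 1 ≤ C₁ := by
    have : 0 < 2*((k:ℝ)+1)/β := by positivity
    rw [hC₁def]; linarith
  set B := C0 * C₁^(k+1) * H^s * (ε^s * (ε^k)⁻¹) with hBdef
  have hC₁0 : (0:ℝ) ≤ C₁ := by linarith
  have hB0 : 0 ≤ B := by rw [hBdef]; positivity
  by_cases hint : IntervalIntegrable (fun x => (φ x)^2) volume 1 2
  case neg =>
    rw [l2norm, intervalIntegral.integral_undef hint, Real.sqrt_zero]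
    exact mul_nonneg hB0 (Real.sqrt_nonneg _)
  case pos =>
  have ha : 0 < β/(2*((k:ℝ)+1)) := by positivity
  have h1a : 1 + 1/(β/(2*((k:ℝ)+1))) = C₁ := by rw [hC₁def, one_div_div]
  set M := mM H ε with hMdef
  have hmesh : ∀ n, n < M → 0 ≤ duranX0 H ε n ∧ duranX0 H ε n ≤ duranX0 H ε (n+1) ∧
      duranX0 H ε (n+1) ≤ 1 ∧ duranX0 H ε (n+1) - duranX0 H ε n ≤
        C₁ * ε * H * Real.exp (β/(2*((k:ℝ)+1)) * duranX0 H ε n / ε) := by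
    intro n hn
    have hd := duran_cell ⟨hH0,hH1⟩ ⟨hε0,hε1⟩ hP ha (j := n+1) (by omega) (by omega)
    rw [Nat.add_sub_cancel, h1a] at hd
    exact hd
  have hx0 : ∀ n, n ≤ M → 0 ≤ duranX0 H ε n ∧ duranX0 H ε n ≤ 1 := by
    intro n hn
    match n with
    | 0 => rw [duranX0_zero]; exact ⟨le_refl _, zero_le_one⟩
    | (m+1) =>
      obtain ⟨h1, h2, h3, _⟩ := hmesh m (by omega)
      exact ⟨le_trans h1 h2, h3⟩
  set A : ℕ → ℝ := fun n => duranX H ε (M + n) with hAdef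
  have hA : ∀ n, n ≤ M → A n = 1 + duranX0 H ε n := fun n hn =>
    duranX_shift ⟨hH0,hH1⟩ ⟨hε0,hε1⟩ hP hn
  have hA0 : A 0 = 1 := by rw [hA 0 (Nat.zero_le _), duranX0_zero]; norm_num
  have hAM : A M = 2 := by
    rw [hA M le_rfl, duranX0_mM ⟨hH0,hH1⟩ ⟨hε0,hε1⟩ hP]; norm_num
  have hAmono : ∀ n, n < M → A n ≤ A (n+1) := by
    intro n hn
    rw [hA n (by omega), hA (n+1) (by omega)]
    have := (hmesh n hn).2.1
    linarith
  have hAin : ∀ n, n ≤ M → 1 ≤ A n ∧ A n ≤ 2 := by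
    intro n hn
    rw [hA n hn]
    obtain ⟨h1,h2⟩ := hx0 n hn
    constructor <;> linarith
  have hsub : ∀ n, n < M → Set.uIcc (A n) (A (n+1)) ⊆ Set.uIcc (1:ℝ) 2 := by
    intro n hn
    apply Set.uIcc_subset_uIcc <;> rw [Set.mem_uIcc] <;> left
    · exact ⟨(hAin n (by omega)).1, (hAin n (by omega)).2⟩
    · exact ⟨(hAin (n+1) (by omega)).1, (hAin (n+1) (by omega)).2⟩
  have hφint : ∀ n, n < M → IntervalIntegrable (fun x => (φ x)^2) volume (A n) (A (n+1)) :=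
    fun n hn => hint.mono_set (hsub n hn)
  have hsplitφ : ∫ x in (1:ℝ)..2, (φ x)^2
      = ∑ n ∈ Finset.range M, ∫ x in A n..A (n+1), (φ x)^2 := by
    rw [intervalIntegral.sum_integral_adjacent_intervals (fun n hn => hφint n hn), hA0, hAM]
  have hGc : Continuous fun x : ℝ => Real.exp (-β * (x-1)/ε) := by fun_prop
  have hsplitG : ∫ x in (1:ℝ)..2, Real.exp (-β * (x-1)/ε)
      = ∑ n ∈ Finset.range M, ∫ x in A n..A (n+1), Real.exp (-β * (x-1)/ε) := by
    rw [intervalIntegral.sum_integral_adjacent_intervals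
      (fun n hn => hGc.intervalIntegrable _ _), hA0, hAM]
  have hcell2 : ∀ n, n < M → ∫ x in A n..A (n+1), (φ x)^2
      ≤ B^2 * ∫ x in A n..A (n+1), Real.exp (-β * (x-1)/ε) := by
    intro n hn
    obtain ⟨hy0, hymono, hy1, hwidth⟩ := hmesh n hn
    have huw : A n ≤ A (n+1) := hAmono n hn
    have hwu : A (n+1) - A n = duranX0 H ε (n+1) - duranX0 H ε n := by
      rw [hA n (by omega), hA (n+1) (by omega)]; ring
    have hh0 : 0 ≤ A (n+1) - A n := by linarith
    have hDint : IntervalIntegrable (fun x => (D x)^2) volume (A n) (A (n+1)) :=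
      (hD.pow 2).intervalIntegrable _ _
    have hDnn : 0 ≤ ∫ x in A n..A (n+1), (D x)^2 :=
      intervalIntegral.integral_nonneg huw (fun x _ => sq_nonneg _)
    have hstep1 : ∫ x in A n..A (n+1), (φ x)^2
        ≤ (C0 * (A (n+1) - A n)^s)^2 * ∫ x in A n..A (n+1), (D x)^2 :=
      l2_sq_le huw (mul_nonneg hC0 (pow_nonneg hh0 s)) (hcell n hn) hDnn
    have hpoint : ∀ x ∈ Set.Icc (A n) (A (n+1)),
        (C0 * (A (n+1) - A n)^s)^2 * (D x)^2 ≤ B^2 * Real.exp (-β * (x-1)/ε) := by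
      intro x hx
      have hx12 : x ∈ Set.Icc (1:ℝ) 2 :=
        ⟨le_trans (hAin n (by omega)).1 hx.1, le_trans hx.2 (hAin (n+1) (by omega)).2⟩
      have hyx : duranX0 H ε n ≤ x - 1 := by
        have h7 := hx.1
        rw [hA n (by omega)] at h7
        linarith
      rw [hBdef, hwu]
      rw [hwu] at hh0
      exact pointwise_bound hβ hε0 hH0 hC0 hC₁1 hs hy0 hyx hh0 hwidth (hDb x hx12)
    calc ∫ x in A n..A (n+1), (φ x)^2
        ≤ (C0 * (A (n+1) - A n)^s)^2 * ∫ x in A n..A (n+1), (D x)^2 := hstep1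
      _ = ∫ x in A n..A (n+1), (C0 * (A (n+1) - A n)^s)^2 * (D x)^2 :=
          (intervalIntegral.integral_const_mul _ _).symm
      _ ≤ ∫ x in A n..A (n+1), B^2 * Real.exp (-β * (x-1)/ε) := by
          apply intervalIntegral.integral_mono_on huw
            (hDint.const_mul _) ((hGc.intervalIntegrable _ _).const_mul _) hpoint
      _ = B^2 * ∫ x in A n..A (n+1), Real.exp (-β * (x-1)/ε) :=
          intervalIntegral.integral_const_mul _ _
  have hsum : ∫ x in (1:ℝ)..2, (φ x)^2 ≤ B^2 * (ε/β) := by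
    rw [hsplitφ]
    calc ∑ n ∈ Finset.range M, ∫ x in A n..A (n+1), (φ x)^2
        ≤ ∑ n ∈ Finset.range M, B^2 * ∫ x in A n..A (n+1), Real.exp (-β * (x-1)/ε) :=
          Finset.sum_le_sum (fun n hn => hcell2 n (Finset.mem_range.1 hn))
      _ = B^2 * ∑ n ∈ Finset.range M, ∫ x in A n..A (n+1), Real.exp (-β * (x-1)/ε) := by
          rw [Finset.mul_sum]
      _ = B^2 * ∫ x in (1:ℝ)..2, Real.exp (-β * (x-1)/ε) := by rw [← hsplitG]
      _ ≤ B^2 * (ε/β) := by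
          apply mul_le_mul_of_nonneg_left ?_ (sq_nonneg _)
          have := exp_integral_le hβ hε0
          calc ∫ x in (1:ℝ)..2, Real.exp (-β * (x-1)/ε)
              = ∫ x in (1:ℝ)..2, Real.exp (-β * (x-1) / ε) := by norm_num
            _ ≤ ε/β := this
  rw [l2norm]
  calc Real.sqrt (∫ x in (1:ℝ)..2, (φ x)^2) ≤ Real.sqrt (B^2 * (ε/β)) :=
        Real.sqrt_le_sqrt hsum
    _ = B * Real.sqrt (ε/β) := by rw [Real.sqrt_mul (sq_nonneg _), Real.sqrt_sq hB0]

/-- Interpolation estimates for the interior weak layer `W` on the Durán mesh: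
`‖W − IW‖_{L²(1,2)} ≤ C ε^{3/2} H^{k+1}` and `‖(W − IW)'‖_{L²(1,2)} ≤ C ε^{1/2} H^k`
with `C = C(k,β,C₀)` independent of `ε` and `H`. -/
theorem weak_layer_interpolation (k : ℕ) (hk : 1 ≤ k) (β C0 : ℝ) (hβ : 0 < β) (hC0 : 0 ≤ C0) :
    ∃ C : ℝ, 0 < C ∧
      ∀ H ε : ℝ, H ∈ Set.Ioo (0:ℝ) 1 → ε ∈ Set.Ioo (0:ℝ) 1 → H * ε * mL H < 1 →
      ∀ I : (ℝ → ℝ) → ℝ → ℝ, PerCell k C0 (duranX H ε) (2 * mM H ε) I →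
      ∀ W : ℝ → ℝ, ContDiff ℝ (k + 1) W →
        (∀ x ∈ Set.Icc (1:ℝ) 2,
          |iteratedDeriv (k + 1) W x| ≤ ε ^ ((1:ℤ) - (k + 1)) * Real.exp (-β * (x - 1) / ε)) →
        l2norm (fun y => W y - I W y) 1 2 ≤ C * ε ^ ((3:ℝ)/2) * H ^ (k + 1) ∧
        l2norm (deriv (fun y => W y - I W y)) 1 2 ≤ C * Real.sqrt ε * H ^ k := by
  have hQ1 : (1:ℝ) ≤ 1 + 2*((k:ℝ)+1)/β := by
    have : 0 < 2*((k:ℝ)+1)/β := by positivity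
    linarith
  refine ⟨(C0+1) * (1 + 2*((k:ℝ)+1)/β)^(k+1) * Real.sqrt (1/β) + 1, ?_, ?_⟩
  · positivity
  intro H ε hH hε hP I hPC W hW hWb
  obtain ⟨hH0, hH1⟩ := hH
  obtain ⟨hε0, hε1⟩ := hε
  have hDc : Continuous (iteratedDeriv (k+1) W) :=
    hW.continuous_iteratedDeriv (k+1) (le_refl _)
  have hQ0 : (0:ℝ) ≤ (1 + 2*((k:ℝ)+1)/β)^(k+1) := by positivity
  have hs1 : (0:ℝ) ≤ Real.sqrt (1/β) := Real.sqrt_nonneg _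
  have hsqsplit : Real.sqrt (ε/β) = Real.sqrt ε * Real.sqrt (1/β) := by
    rw [show ε/β = ε * (1/β) by ring, Real.sqrt_mul hε0.le]
  constructor
  · -- L² bound
    have hcell1 : ∀ n : ℕ, n < mM H ε →
        l2norm (fun y => W y - I W y)
            (duranX H ε (mM H ε + n)) (duranX H ε (mM H ε + n + 1)) ≤
          C0 * (duranX H ε (mM H ε + n + 1) - duranX H ε (mM H ε + n)) ^ (k+1) *
            l2norm (iteratedDeriv (k+1) W)
              (duranX H ε (mM H ε + n)) (duranX H ε (mM H ε + n + 1)) := by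
      intro n hn
      exact (hPC W hW (mM H ε + n + 1) (by omega) (by omega)).1 (k+1) (by omega) le_rfl
    have hb := layer_bound (s := k+1) hβ hC0 ⟨hH0,hH1⟩ ⟨hε0,hε1⟩ hP le_rfl
      (fun y => W y - I W y) (iteratedDeriv (k+1) W) hDc hWb hcell1
    refine le_trans hb ?_
    have hεred : ε^(k+1) * (ε^k)⁻¹ = ε := by
      rw [pow_succ]
      field_simp
    have hrp : ε ^ ((3:ℝ)/2) = ε * Real.sqrt ε := by
      rw [show (3:ℝ)/2 = 1 + 1/2 by norm_num, Real.rpow_add hε0, Real.rpow_one,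
        ← Real.sqrt_eq_rpow]
    rw [hεred, hsqsplit, hrp]
    have hse : 0 ≤ ε * Real.sqrt ε := by positivity
    have hHp : (0:ℝ) ≤ H^(k+1) := by positivity
    calc C0 * (1 + 2*((k:ℝ)+1)/β)^(k+1) * H^(k+1) * ε * (Real.sqrt ε * Real.sqrt (1/β))
        = (C0 * (1 + 2*((k:ℝ)+1)/β)^(k+1) * Real.sqrt (1/β)) * (ε * Real.sqrt ε) * H^(k+1) := by
          ring
      _ ≤ ((C0+1) * (1 + 2*((k:ℝ)+1)/β)^(k+1) * Real.sqrt (1/β) + 1)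
            * (ε * Real.sqrt ε) * H^(k+1) := by
          apply mul_le_mul_of_nonneg_right _ hHp
          apply mul_le_mul_of_nonneg_right _ hse
          nlinarith [mul_nonneg hQ0 hs1]
  · -- H¹ bound
    have hcell2 : ∀ n : ℕ, n < mM H ε →
        l2norm (deriv (fun y => W y - I W y))
            (duranX H ε (mM H ε + n)) (duranX H ε (mM H ε + n + 1)) ≤
          C0 * (duranX H ε (mM H ε + n + 1) - duranX H ε (mM H ε + n)) ^ k *
            l2norm (iteratedDeriv (k+1) W)
              (duranX H ε (mM H ε + n)) (duranX H ε (mM H ε + n + 1)) := by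
      intro n hn
      exact (hPC W hW (mM H ε + n + 1) (by omega) (by omega)).2 k hk le_rfl
    have hb := layer_bound (s := k) hβ hC0 ⟨hH0,hH1⟩ ⟨hε0,hε1⟩ hP (by omega)
      (deriv (fun y => W y - I W y)) (iteratedDeriv (k+1) W) hDc hWb hcell2
    refine le_trans hb ?_
    have hεred : ε^k * (ε^k)⁻¹ = 1 := mul_inv_cancel₀ (pow_ne_zero k hε0.ne')
    rw [hεred, hsqsplit]
    have hse : 0 ≤ Real.sqrt ε := Real.sqrt_nonneg _
    have hHp : (0:ℝ) ≤ H^k := by positivity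
    calc C0 * (1 + 2*((k:ℝ)+1)/β)^(k+1) * H^k * 1 * (Real.sqrt ε * Real.sqrt (1/β))
        = (C0 * (1 + 2*((k:ℝ)+1)/β)^(k+1) * Real.sqrt (1/β)) * Real.sqrt ε * H^k := by
          ring
      _ ≤ ((C0+1) * (1 + 2*((k:ℝ)+1)/β)^(k+1) * Real.sqrt (1/β) + 1)
            * Real.sqrt ε * H^k := by
          apply mul_le_mul_of_nonneg_right _ hHp
          apply mul_le_mul_of_nonneg_right _ hse
          nlinarith [mul_nonneg hQ0 hs1]
end

section
/- Let v ∈ H¹₀(0,2), b ∈ C¹([0,2]), η = η_S + η_E ∈ H¹(0,2), and suppose ‖η_S'‖_{L²(0,2)} ≤ A, ‖η_E‖_{L²(0,2)} ≤ ε^{1/2} A, for some A > 0 and ε > 0. Then |⟨b η', v⟩_{(0,2)}| ≤ C A (‖v‖_{L²(0,2)} + ε^{1/2}‖v'‖_{L²(0,2)}) with C depending only on ‖b‖_{W^{1,∞}(0,2)}; in particular the convection term of the Galerkin error is bounded by C A |||v||| (up to a factor depending on γ), where |||v|||² = ε‖v'‖²_{L²(0,2)} + γ‖v‖²_{L²(0,2)}.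 -/
open MeasureTheory Set

/-- The energy norm `|||v|||² = ε‖v'‖²_{L²(0,2)} + γ‖v‖²_{L²(0,2)}`. -/
noncomputable def energyNorm (ε γ : ℝ) (v : ℝ → ℝ) : ℝ :=
  Real.sqrt (ε * (∫ x in (0:ℝ)..2, (deriv v x) ^ 2) + γ * ∫ x in (0:ℝ)..2, (v x) ^ 2)


/-- Cauchy–Schwarz for interval integrals of continuous functions. -/
lemma cs_abs {f g : ℝ → ℝ} {a b : ℝ} (hab : a ≤ b) (hf : Continuous f) (hg : Continuous g) :
    |∫ x in a..b, f x * g x| ≤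
      Real.sqrt (∫ x in a..b, f x ^ 2) * Real.sqrt (∫ x in a..b, g x ^ 2) := by
  set F := ∫ x in a..b, f x ^ 2 with hFdef
  set G := ∫ x in a..b, g x ^ 2 with hGdef
  set I := ∫ x in a..b, f x * g x with hIdef
  have hF : 0 ≤ F := intervalIntegral.integral_nonneg hab fun x _ => sq_nonneg _
  have key : ∀ t : ℝ, 0 ≤ F * (t * t) + (2 * I) * t + G := by
    intro t
    have h0 : 0 ≤ ∫ x in a..b, (t * f x + g x) ^ 2 :=
      intervalIntegral.integral_nonneg hab fun x _ => sq_nonneg _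
    have hexp : (fun x => (t * f x + g x) ^ 2) =
        fun x => t ^ 2 * f x ^ 2 + (2 * t) * (f x * g x) + g x ^ 2 := by
      funext x; ring
    rw [hexp] at h0
    rw [intervalIntegral.integral_add (f := fun x => t ^ 2 * f x ^ 2 + (2 * t) * (f x * g x))
          (g := fun x => g x ^ 2) (((continuous_const.mul (hf.pow 2)).add
          (continuous_const.mul (hf.mul hg))).intervalIntegrable _ _)
        ((hg.pow 2).intervalIntegrable _ _),
      intervalIntegral.integral_add (f := fun x => t ^ 2 * f x ^ 2)
        (g := fun x => (2 * t) * (f x * g x)) ((continuous_const.mul (hf.pow 2)).intervalIntegrable _ _)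
        ((continuous_const.mul (hf.mul hg)).intervalIntegrable _ _),
      intervalIntegral.integral_const_mul, intervalIntegral.integral_const_mul] at h0
    nlinarith [h0]
  have hd := discrim_le_zero key
  rw [discrim] at hd
  have hI2 : I ^ 2 ≤ F * G := by nlinarith
  calc |I| = Real.sqrt (I ^ 2) := (Real.sqrt_sq_eq_abs I).symm
    _ ≤ Real.sqrt (F * G) := Real.sqrt_le_sqrt hI2
    _ = Real.sqrt F * Real.sqrt G := Real.sqrt_mul hF G

/-- Weighted L² bound: if `|c| ≤ M` on `[0,2]` then `‖c·w‖ ≤ M ‖w‖`. -/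
lemma weighted_l2 {c w : ℝ → ℝ} (hc : Continuous c) (hw : Continuous w) {M : ℝ}
    (hM : 0 ≤ M) (h : ∀ x ∈ Icc (0:ℝ) 2, |c x| ≤ M) :
    Real.sqrt (∫ x in (0:ℝ)..2, (c x * w x) ^ 2) ≤
      M * Real.sqrt (∫ x in (0:ℝ)..2, w x ^ 2) := by
  have hmono : (∫ x in (0:ℝ)..2, (c x * w x) ^ 2) ≤ ∫ x in (0:ℝ)..2, M ^ 2 * w x ^ 2 := by
    apply intervalIntegral.integral_mono_on (by norm_num)
      (((hc.mul hw).pow 2).intervalIntegrable _ _)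
      ((continuous_const.mul (hw.pow 2)).intervalIntegrable _ _)
    intro x hx
    have hcx := h x hx
    have : c x ^ 2 ≤ M ^ 2 := by nlinarith [abs_nonneg (c x), sq_abs (c x)]
    show (c x * w x) ^ 2 ≤ M ^ 2 * w x ^ 2
    nlinarith [sq_nonneg (w x)]
  calc Real.sqrt (∫ x in (0:ℝ)..2, (c x * w x) ^ 2)
      ≤ Real.sqrt (∫ x in (0:ℝ)..2, M ^ 2 * w x ^ 2) := Real.sqrt_le_sqrt hmono
    _ = M * Real.sqrt (∫ x in (0:ℝ)..2, w x ^ 2) := by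
        rw [intervalIntegral.integral_const_mul, Real.sqrt_mul (sq_nonneg M),
          Real.sqrt_sq hM]

/-- Poincaré inequality on `(0,2)` with zero value at `0`. -/
lemma poincare {v : ℝ → ℝ} (hv : ContDiff ℝ 1 v) (h0 : v 0 = 0) :
    Real.sqrt (∫ x in (0:ℝ)..2, v x ^ 2) ≤
      2 * Real.sqrt (∫ x in (0:ℝ)..2, deriv v x ^ 2) := by
  have hv' : Continuous (deriv v) := hv.continuous_deriv le_rfl
  have hcv : Continuous v := hv.continuous
  set D := ∫ x in (0:ℝ)..2, deriv v x ^ 2 with hDdef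
  have hD : 0 ≤ D := intervalIntegral.integral_nonneg (by norm_num) fun x _ => sq_nonneg _
  have hpt : ∀ x ∈ Icc (0:ℝ) 2, v x ^ 2 ≤ 2 * D := by
    intro x hx
    obtain ⟨hx0, hx2⟩ := hx
    have hftc : ∫ t in (0:ℝ)..x, deriv v t = v x - v 0 :=
      intervalIntegral.integral_deriv_eq_sub (fun t _ => hv.differentiable one_ne_zero t)
        (hv'.intervalIntegrable _ _)
    have hvx : v x = ∫ t in (0:ℝ)..x, deriv v t := by rw [hftc, h0, sub_zero]
    have hcs := cs_abs hx0 (continuous_const : Continuous fun _ : ℝ => (1:ℝ)) hv'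
    simp only [one_mul, one_pow] at hcs
    rw [intervalIntegral.integral_const, smul_eq_mul, mul_one, sub_zero] at hcs
    have hsub : (∫ t in (0:ℝ)..x, deriv v t ^ 2) ≤ D := by
      have hsplit : (∫ t in (0:ℝ)..x, deriv v t ^ 2) + ∫ t in x..2, deriv v t ^ 2 = D :=
        intervalIntegral.integral_add_adjacent_intervals
          ((hv'.pow 2).intervalIntegrable _ _) ((hv'.pow 2).intervalIntegrable _ _)
      have htail : 0 ≤ ∫ t in x..2, deriv v t ^ 2 :=
        intervalIntegral.integral_nonneg hx2 fun t _ => sq_nonneg _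
      linarith
    have h1 : |v x| ≤ Real.sqrt x * Real.sqrt (∫ t in (0:ℝ)..x, deriv v t ^ 2) := by
      rw [hvx]; exact hcs
    have h2 : v x ^ 2 ≤ x * ∫ t in (0:ℝ)..x, deriv v t ^ 2 := by
      have := mul_self_le_mul_self (abs_nonneg (v x)) h1
      have hxs : Real.sqrt x * Real.sqrt x = x := Real.mul_self_sqrt hx0
      have hIs : Real.sqrt (∫ t in (0:ℝ)..x, deriv v t ^ 2) *
          Real.sqrt (∫ t in (0:ℝ)..x, deriv v t ^ 2) = ∫ t in (0:ℝ)..x, deriv v t ^ 2 :=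
        Real.mul_self_sqrt (intervalIntegral.integral_nonneg hx0 fun t _ => sq_nonneg _)
      nlinarith [this, hxs, hIs, abs_mul_abs_self (v x), sq_nonneg (v x),
        Real.sqrt_nonneg x, Real.sqrt_nonneg (∫ t in (0:ℝ)..x, deriv v t ^ 2)]
    have hIx : 0 ≤ ∫ t in (0:ℝ)..x, deriv v t ^ 2 :=
      intervalIntegral.integral_nonneg hx0 fun t _ => sq_nonneg _
    nlinarith
  have hint : (∫ x in (0:ℝ)..2, v x ^ 2) ≤ ∫ x in (0:ℝ)..2, (2 * D : ℝ) := by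
    apply intervalIntegral.integral_mono_on (by norm_num)
      ((hcv.pow 2).intervalIntegrable _ _) (intervalIntegrable_const) hpt
  rw [intervalIntegral.integral_const, smul_eq_mul, sub_zero] at hint
  calc Real.sqrt (∫ x in (0:ℝ)..2, v x ^ 2) ≤ Real.sqrt (2 * (2 * D)) :=
        Real.sqrt_le_sqrt hint
    _ = 2 * Real.sqrt D := by
        rw [show (2:ℝ) * (2 * D) = 2^2 * D by ring, Real.sqrt_mul (by positivity),
          Real.sqrt_sq (by norm_num)]

set_option maxHeartbeats 1000000 in
/-- Estimate of the convection term of the Galerkin error: for `v ∈ H¹₀(0,2)`,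
`η = η_S + η_E` with `‖η_S'‖ ≤ A` and `‖η_E‖ ≤ ε^{1/2} A`, one has
`|⟨b η', v⟩| ≤ C A (‖v‖ + ε^{1/2}‖v'‖)` with `C` depending only on `‖b‖_{W^{1,∞}(0,2)}`;
in particular the convection term is bounded by `C A |||v|||` up to a factor depending
on `γ`. -/
theorem convection_term_estimate (Mb : ℝ) (hMb : 0 ≤ Mb) :
    ∃ C : ℝ, 0 < C ∧
      ∀ b : ℝ → ℝ, ContDiff ℝ 1 b →
        (∀ x ∈ Set.Icc (0:ℝ) 2, |b x| ≤ Mb ∧ |deriv b x| ≤ Mb) →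
      ∀ ε A γ : ℝ, 0 < ε → 0 < A → 0 < γ →
      ∀ v ηS ηE : ℝ → ℝ, ContDiff ℝ 1 v → v 0 = 0 → v 2 = 0 →
        ContDiff ℝ 1 ηS → ContDiff ℝ 1 ηE →
        l2norm (deriv ηS) 0 2 ≤ A → l2norm ηE 0 2 ≤ Real.sqrt ε * A →
        |∫ x in (0:ℝ)..2, b x * deriv (fun y => ηS y + ηE y) x * v x| ≤
          C * A * (l2norm v 0 2 + Real.sqrt ε * l2norm (deriv v) 0 2) ∧
        |∫ x in (0:ℝ)..2, b x * deriv (fun y => ηS y + ηE y) x * v x| ≤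
          C * (1 + (Real.sqrt γ)⁻¹) * A * energyNorm ε γ v := by
  refine ⟨3 * Mb + 1, by positivity, ?_⟩
  intro b hb hbB ε A γ hε hA hγ v ηS ηE hv hv0 hv2 hS hE hSA hEA
  have cb : Continuous b := hb.continuous
  have cb' : Continuous (deriv b) := hb.continuous_deriv le_rfl
  have cv : Continuous v := hv.continuous
  have cv' : Continuous (deriv v) := hv.continuous_deriv le_rfl
  have cS' : Continuous (deriv ηS) := hS.continuous_deriv le_rfl
  have cE : Continuous ηE := hE.continuous
  have cE' : Continuous (deriv ηE) := hE.continuous_deriv le_rfl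
  simp only [l2norm] at hSA hEA ⊢
  set nv := Real.sqrt (∫ x in (0:ℝ)..2, v x ^ 2) with hnv
  set nv' := Real.sqrt (∫ x in (0:ℝ)..2, deriv v x ^ 2) with hnv'
  have hnv0 : 0 ≤ nv := Real.sqrt_nonneg _
  have hnv'0 : 0 ≤ nv' := Real.sqrt_nonneg _
  have hse : 0 ≤ Real.sqrt ε := Real.sqrt_nonneg _
  -- split the integral
  set I1 := ∫ x in (0:ℝ)..2, deriv ηS x * (b x * v x) with hI1def
  set I2 := ∫ x in (0:ℝ)..2, (b x * v x) * deriv ηE x with hI2def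
  have hIeq : (∫ x in (0:ℝ)..2, b x * deriv (fun y => ηS y + ηE y) x * v x) = I1 + I2 := by
    rw [hI1def, hI2def, ← intervalIntegral.integral_add
      (f := fun x => deriv ηS x * (b x * v x)) (g := fun x => (b x * v x) * deriv ηE x)
      ((cS'.mul (cb.mul cv)).intervalIntegrable _ _)
      (((cb.mul cv).mul cE').intervalIntegrable _ _)]
    apply intervalIntegral.integral_congr
    intro x _
    simp only
    rw [show (fun y => ηS y + ηE y) = ηS + ηE from rfl, deriv_add (hS.differentiable one_ne_zero x) (hE.differentiable one_ne_zero x)]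
    ring
  -- bound I1
  have hbv : Real.sqrt (∫ x in (0:ℝ)..2, (b x * v x) ^ 2) ≤ Mb * nv :=
    weighted_l2 cb cv hMb (fun x hx => (hbB x hx).1)
  have hI1 : |I1| ≤ Mb * A * nv := by
    have h := cs_abs (by norm_num : (0:ℝ) ≤ 2) cS' (cb.mul cv)
    calc |I1| ≤ Real.sqrt (∫ x in (0:ℝ)..2, deriv ηS x ^ 2) *
          Real.sqrt (∫ x in (0:ℝ)..2, (b x * v x) ^ 2) := h
      _ ≤ A * (Mb * nv) :=
          mul_le_mul hSA hbv (Real.sqrt_nonneg _) hA.le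
      _ = Mb * A * nv := by ring
  -- integrate I2 by parts
  have hparts : I2 = (b 2 * v 2) * ηE 2 - (b 0 * v 0) * ηE 0 -
      ∫ x in (0:ℝ)..2, (deriv b x * v x + b x * deriv v x) * ηE x := by
    rw [hI2def]
    apply intervalIntegral.integral_mul_deriv_eq_deriv_mul
      (u := fun x => b x * v x) (u' := fun x => deriv b x * v x + b x * deriv v x)
      (v := ηE) (v' := deriv ηE)
    · intro x _
      exact ((hb.differentiable one_ne_zero x).hasDerivAt.mul
        (hv.differentiable one_ne_zero x).hasDerivAt)
    · intro x _
      exact (hE.differentiable one_ne_zero x).hasDerivAt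
    · exact ((cb'.mul cv).add (cb.mul cv')).intervalIntegrable _ _
    · exact cE'.intervalIntegrable _ _
  set J1 := ∫ x in (0:ℝ)..2, ηE x * (deriv b x * v x) with hJ1def
  set J2 := ∫ x in (0:ℝ)..2, ηE x * (b x * deriv v x) with hJ2def
  have hsplit : (∫ x in (0:ℝ)..2, (deriv b x * v x + b x * deriv v x) * ηE x) = J1 + J2 := by
    rw [hJ1def, hJ2def, ← intervalIntegral.integral_add
      (f := fun x => ηE x * (deriv b x * v x)) (g := fun x => ηE x * (b x * deriv v x))
      ((cE.mul (cb'.mul cv)).intervalIntegrable _ _)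
      ((cE.mul (cb.mul cv')).intervalIntegrable _ _)]
    apply intervalIntegral.integral_congr
    intro x _
    simp only
    ring
  have hI2eq : I2 = -(J1 + J2) := by
    rw [hparts, hsplit, hv0, hv2]
    ring
  have hJ1 : |J1| ≤ Real.sqrt ε * A * (Mb * nv) := by
    have h := cs_abs (by norm_num : (0:ℝ) ≤ 2) cE (cb'.mul cv)
    have hw : Real.sqrt (∫ x in (0:ℝ)..2, (deriv b x * v x) ^ 2) ≤ Mb * nv :=
      weighted_l2 cb' cv hMb (fun x hx => (hbB x hx).2)
    calc |J1| ≤ Real.sqrt (∫ x in (0:ℝ)..2, ηE x ^ 2) *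
          Real.sqrt (∫ x in (0:ℝ)..2, (deriv b x * v x) ^ 2) := h
      _ ≤ (Real.sqrt ε * A) * (Mb * nv) :=
          mul_le_mul hEA hw (Real.sqrt_nonneg _) (by positivity)
  have hJ2 : |J2| ≤ Real.sqrt ε * A * (Mb * nv') := by
    have h := cs_abs (by norm_num : (0:ℝ) ≤ 2) cE (cb.mul cv')
    have hw : Real.sqrt (∫ x in (0:ℝ)..2, (b x * deriv v x) ^ 2) ≤ Mb * nv' :=
      weighted_l2 cb cv' hMb (fun x hx => (hbB x hx).1)
    calc |J2| ≤ Real.sqrt (∫ x in (0:ℝ)..2, ηE x ^ 2) *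
          Real.sqrt (∫ x in (0:ℝ)..2, (b x * deriv v x) ^ 2) := h
      _ ≤ (Real.sqrt ε * A) * (Mb * nv') :=
          mul_le_mul hEA hw (Real.sqrt_nonneg _) (by positivity)
  have hI2 : |I2| ≤ Real.sqrt ε * A * (Mb * nv) + Real.sqrt ε * A * (Mb * nv') := by
    rw [hI2eq, abs_neg]
    calc |J1 + J2| ≤ |J1| + |J2| := abs_add_le _ _
      _ ≤ _ := add_le_add hJ1 hJ2
  -- Poincaré
  have hp : nv ≤ 2 * nv' := poincare hv hv0
  -- first estimate
  have goal1 : |∫ x in (0:ℝ)..2, b x * deriv (fun y => ηS y + ηE y) x * v x| ≤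
      (3 * Mb + 1) * A * (nv + Real.sqrt ε * nv') := by
    rw [hIeq]
    have habs : |I1 + I2| ≤ |I1| + |I2| := abs_add_le _ _
    have hmul : Real.sqrt ε * A * (Mb * nv) ≤ Real.sqrt ε * A * (Mb * (2 * nv')) := by
      apply mul_le_mul_of_nonneg_left _ (by positivity)
      exact mul_le_mul_of_nonneg_left hp hMb
    nlinarith [mul_nonneg hA.le hnv0, mul_nonneg (mul_nonneg hA.le hse) hnv'0,
      mul_nonneg (mul_nonneg hMb hA.le) hnv0]
  refine ⟨goal1, ?_⟩
  -- second estimate via energy norm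
  simp only [energyNorm]
  set D := ∫ x in (0:ℝ)..2, deriv v x ^ 2 with hDdef
  set V := ∫ x in (0:ℝ)..2, v x ^ 2 with hVdef
  have hD0 : 0 ≤ D := intervalIntegral.integral_nonneg (by norm_num) fun x _ => sq_nonneg _
  have hV0 : 0 ≤ V := intervalIntegral.integral_nonneg (by norm_num) fun x _ => sq_nonneg _
  set En := Real.sqrt (ε * D + γ * V) with hEn
  have hEn0 : 0 ≤ En := Real.sqrt_nonneg _
  have hE2 : Real.sqrt ε * nv' ≤ En := by
    rw [hnv', hEn, ← Real.sqrt_mul hε.le]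
    exact Real.sqrt_le_sqrt (by nlinarith)
  have hE1 : nv ≤ (Real.sqrt γ)⁻¹ * En := by
    have key : V ≤ γ⁻¹ * (ε * D + γ * V) := by
      have : γ⁻¹ * (ε * D + γ * V) = γ⁻¹ * ε * D + V := by
        field_simp
      rw [this]
      nlinarith [mul_nonneg (mul_nonneg (inv_nonneg.2 hγ.le) hε.le) hD0]
    calc nv ≤ Real.sqrt (γ⁻¹ * (ε * D + γ * V)) := Real.sqrt_le_sqrt key
      _ = (Real.sqrt γ)⁻¹ * En := by
          rw [Real.sqrt_mul (inv_nonneg.2 hγ.le), Real.sqrt_inv]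
  have hsg : 0 < (Real.sqrt γ)⁻¹ := inv_pos.2 (Real.sqrt_pos.2 hγ)
  calc |∫ x in (0:ℝ)..2, b x * deriv (fun y => ηS y + ηE y) x * v x| ≤
        (3 * Mb + 1) * A * (nv + Real.sqrt ε * nv') := goal1
    _ ≤ (3 * Mb + 1) * A * ((Real.sqrt γ)⁻¹ * En + En) := by
        apply mul_le_mul_of_nonneg_left (add_le_add hE1 hE2) (by positivity)
    _ = (3 * Mb + 1) * (1 + (Real.sqrt γ)⁻¹) * A * En := by ring
end
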